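/- arXiv:1904.08832 — 5 statements merged into one kernel-verified Lean document; each statement's English description precedes it below -/
import Mathlib

section
/- Let ψ_{AB} be a bipartite density operator on A⊗B whose marginals ψ_A and ψ_B are both maximally mixed (i.e., ψ_A = Id/d_A and ψ_B = Id/d_B). Then there exist standard orthonormal bases {X_α} of M(A) and {Y_β} of M(B) such that Tr((X_α ⊗ Y_β) ψ_{AB}) = 0 whenever α ≠ β. -/
/-!
The Hermitian `d × d` matrices, with the normalized Hilbert–Schmidt inner product, form a real
Euclidean space of dimension `d²` in which the identity is a unit vector `u`. In such coordinates
the correlation `(X, Y) ↦ Tr ((X ⊗ Y) ψ)` is a real bilinear form `M` (real because `ψ` is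
Hermitian), and maximally mixed marginals say exactly that `M (u_A, ·) = ⟪u_B, ·⟫` and
`M (·, u_B) = ⟪u_A, ·⟫`. Hence `M` pairs `u_Aᗮ` only with `u_Bᗮ`; a singular value
decomposition of `M` between these complements, completed by `u_A` and `u_B` at index `0`,
gives the two bases.
-/

open Matrix Kronecker
open scoped ComplexOrder

noncomputable section

/-- The normalized Hilbert–Schmidt inner product `⟨P,Q⟩ = (1/d) Tr(P† Q)` on `M_d`. -/
def innerN (d : ℕ) (P Q : Matrix (Fin d) (Fin d) ℂ) : ℂ :=
  Matrix.trace (Pᴴ * Q) / (d : ℂ)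

/-- A standard orthonormal basis of `M_d`. -/
def IsStdONB (d : ℕ) (B : Fin (d ^ 2) → Matrix (Fin d) (Fin d) ℂ) : Prop :=
  (∀ i, (B i).IsHermitian) ∧
  (∀ i : Fin (d ^ 2), (i : ℕ) = 0 → B i = 1) ∧
  (∀ i j, innerN d (B i) (B j) = if i = j then 1 else 0) ∧
  Submodule.span ℂ (Set.range B) = ⊤

open Module Complex
open scoped RealInnerProductSpace

section Orthonormal

variable {𝕜 E : Type*} [RCLike 𝕜] [NormedAddCommGroup E] [InnerProductSpace 𝕜 E]
  [FiniteDimensional 𝕜 E]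

theorem exists_orthonormalBasis_inner_eq_zero_of_pairwise {ι : Type*} [Fintype ι]
    (card_ι : finrank 𝕜 E = Fintype.card ι) {f : ι → E}
    (hf : Pairwise fun i j => inner 𝕜 (f i) (f j) = 0) :
    ∃ b : OrthonormalBasis ι 𝕜 E, ∀ i j, i ≠ j → inner 𝕜 (f i) (b j) = 0 := by
  classical
  let s : Set ι := {i | f i ≠ 0}
  have hs : Orthonormal 𝕜 (s.domRestrict fun i => (‖f i‖⁻¹ : 𝕜) • f i) := by
    rw [orthonormal_iff_ite]
    rintro ⟨i, hi⟩ ⟨j, hj⟩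
    simp only [Set.domRestrict_apply, inner_smul_left, inner_smul_right, Subtype.mk.injEq]
    by_cases hij : i = j
    · subst hij
      have : (‖f i‖ : 𝕜) ≠ 0 := by exact_mod_cast norm_ne_zero_iff.mpr hi
      rw [inner_self_eq_norm_sq_to_K, if_pos rfl, RCLike.conj_inv, RCLike.conj_ofReal]
      field_simp
    · simp [hf hij, hij]
  obtain ⟨b, hb⟩ := hs.exists_orthonormalBasis_extension_of_card_eq card_ι
  refine ⟨b, fun i j hij => ?_⟩
  by_cases hi : f i = 0
  · simp [hi]
  · have : f i = (‖f i‖ : 𝕜) • b i := by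
      rw [hb i hi, smul_smul, mul_inv_cancel₀ (by simpa using hi), one_smul]
    rw [this, inner_smul_left, b.orthonormal.2 hij, mul_zero]

theorem exists_orthonormalBasis_eq_cons {k : ℕ} (hk : finrank 𝕜 E = k + 1) {u : E}
    (hu : ‖u‖ = 1) (b : OrthonormalBasis (Fin k) 𝕜 (𝕜 ∙ u)ᗮ) :
    ∃ e : OrthonormalBasis (Fin (k + 1)) 𝕜 E, ⇑e = Fin.cons u fun i => (b i : E) := by
  have hcons : Orthonormal 𝕜 (Fin.cons u fun i => (b i : E) : Fin (k + 1) → E) := by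
    classical
    have hbu : ∀ i, inner 𝕜 u (b i : E) = 0 := fun i =>
      Submodule.inner_right_of_mem_orthogonal (Submodule.mem_span_singleton_self u) (b i).2
    rw [orthonormal_iff_ite]
    intro i j
    cases i using Fin.cases <;> cases j using Fin.cases
    · simp [inner_self_eq_norm_sq_to_K, hu]
    · simp [hbu, (Fin.succ_ne_zero _).symm]
    · simp [inner_eq_zero_symm.mp (hbu _)]
    · simp [← Submodule.coe_inner, orthonormal_iff_ite.mp b.orthonormal]
  refine ⟨OrthonormalBasis.mk hcons ?_, OrthonormalBasis.coe_mk _ _⟩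
  rw [hcons.linearIndependent.span_eq_top_of_card_eq_finrank' (by simp [hk])]

end Orthonormal

theorem LinearMap.exists_apply_apply_eq_inner {M W : Type*} [AddCommGroup M] [Module ℝ M]
    [NormedAddCommGroup W] [InnerProductSpace ℝ W] [FiniteDimensional ℝ W]
    (B : M →ₗ[ℝ] W →ₗ[ℝ] ℝ) :
    ∃ L : M →ₗ[ℝ] W, ∀ x y, B x y = ⟪L x, y⟫ := by
  let e := stdOrthonormalBasis ℝ W
  refine ⟨∑ j, (B.flip (e j)).smulRight (e j), fun x y => ?_⟩
  conv_lhs => rw [← e.sum_repr' y]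
  simp [sum_inner, real_inner_smul_left, mul_comm]

section SingularValueDecomposition

variable {V W : Type*} [NormedAddCommGroup V] [InnerProductSpace ℝ V] [FiniteDimensional ℝ V]
  [NormedAddCommGroup W] [InnerProductSpace ℝ W] [FiniteDimensional ℝ W]

theorem LinearMap.exists_svd_of_le (B : V →ₗ[ℝ] W →ₗ[ℝ] ℝ) {n m : ℕ}
    (hn : finrank ℝ V = n) (hm : finrank ℝ W = m) (hnm : n ≤ m) :
    ∃ (x : OrthonormalBasis (Fin n) ℝ V) (y : OrthonormalBasis (Fin m) ℝ W),
      ∀ (i : Fin n) (j : Fin m), (i : ℕ) ≠ j → B (x i) (y j) = 0 := by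
  obtain ⟨L, hL⟩ := B.exists_apply_apply_eq_inner
  -- eigenvectors of `L†L` have pairwise orthogonal images under `L`
  have hT := L.isPositive_adjoint_comp_self.isSymmetric
  let x := hT.eigenvectorBasis hn
  have hLx : Pairwise fun i j => ⟪L (x i), L (x j)⟫ = 0 := by
    intro i j hij
    rw [← LinearMap.adjoint_inner_right, ← LinearMap.comp_apply, hT.apply_eigenvectorBasis,
      real_inner_smul_right, x.orthonormal.2 hij, mul_zero]
  let f : Fin m → W := fun j => if h : (j : ℕ) < n then L (x ⟨j, h⟩) else 0
  have hf : Pairwise fun j k => ⟪f j, f k⟫ = 0 := fun j k hjk => by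
    simp only [f]
    split_ifs
    · exact hLx (by simpa [Fin.ext_iff] using hjk)
    all_goals simp
  obtain ⟨y, hy⟩ := exists_orthonormalBasis_inner_eq_zero_of_pairwise (by simpa using hm) hf
  refine ⟨x, y, fun i j hij => ?_⟩
  simpa [hL, f] using hy (Fin.castLE hnm i) j (by simpa [Fin.ext_iff] using hij)

theorem LinearMap.exists_svd (B : V →ₗ[ℝ] W →ₗ[ℝ] ℝ) {n m : ℕ}
    (hn : finrank ℝ V = n) (hm : finrank ℝ W = m) :
    ∃ (x : OrthonormalBasis (Fin n) ℝ V) (y : OrthonormalBasis (Fin m) ℝ W),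
      ∀ (i : Fin n) (j : Fin m), (i : ℕ) ≠ j → B (x i) (y j) = 0 := by
  rcases le_total n m with h | h
  · exact B.exists_svd_of_le hn hm h
  · obtain ⟨y, x, hyx⟩ := B.flip.exists_svd_of_le hm hn h
    exact ⟨x, y, fun i j hij => hyx j i hij.symm⟩

theorem LinearMap.exists_svd_of_apply_eq_inner (B : V →ₗ[ℝ] W →ₗ[ℝ] ℝ) {n m : ℕ}
    (hn : finrank ℝ V = n) (hm : finrank ℝ W = m) {u : V} {w : W}
    (hu : ‖u‖ = 1) (hw : ‖w‖ = 1) (hBu : ∀ y, B u y = ⟪w, y⟫)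
    (hBw : ∀ x, B x w = ⟪u, x⟫) :
    ∃ (x : OrthonormalBasis (Fin n) ℝ V) (y : OrthonormalBasis (Fin m) ℝ W),
      (∀ i : Fin n, (i : ℕ) = 0 → x i = u) ∧ (∀ j : Fin m, (j : ℕ) = 0 → y j = w) ∧
      ∀ (i : Fin n) (j : Fin m), (i : ℕ) ≠ j → B (x i) (y j) = 0 := by
  have hu0 : u ≠ 0 := norm_ne_zero_iff.mp (hu ▸ one_ne_zero)
  have hw0 : w ≠ 0 := norm_ne_zero_iff.mp (hw ▸ one_ne_zero)
  obtain ⟨n, rfl⟩ :=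
    Nat.exists_eq_add_one.mpr (hn ▸ finrank_pos_iff_exists_ne_zero.mpr ⟨u, hu0⟩)
  obtain ⟨m, rfl⟩ :=
    Nat.exists_eq_add_one.mpr (hm ▸ finrank_pos_iff_exists_ne_zero.mpr ⟨w, hw0⟩)
  obtain ⟨x', y', hxy'⟩ := (B.domRestrict₁₂ (ℝ ∙ u)ᗮ (ℝ ∙ w)ᗮ).exists_svd
    (Submodule.finrank_orthogonal_span_singleton (_i := ⟨hn⟩) hu0)
    (Submodule.finrank_orthogonal_span_singleton (_i := ⟨hm⟩) hw0)
  obtain ⟨x, hx⟩ := exists_orthonormalBasis_eq_cons hn hu x'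
  obtain ⟨y, hy⟩ := exists_orthonormalBasis_eq_cons hm hw y'
  refine ⟨x, y, fun i hi => ?_, fun j hj => ?_, fun i j hij => ?_⟩
  · simp [hx, show i = 0 from Fin.ext hi]
  · simp [hy, show j = 0 from Fin.ext hj]
  cases i using Fin.cases <;> cases j using Fin.cases
  · simp at hij
  · simpa [hx, hy, hBu] using
      Submodule.inner_right_of_mem_orthogonal (Submodule.mem_span_singleton_self w) (y' _).2
  · simpa [hx, hy, hBw] using
      Submodule.inner_right_of_mem_orthogonal (Submodule.mem_span_singleton_self u) (x' _).2
  · simpa [hx, hy, LinearMap.domRestrict₁₂_apply] using hxy' _ _ (by simpa using hij)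

end SingularValueDecomposition

namespace Matrix

variable {n : Type*} [LinearOrder n]

-- Coordinates in the basis `E_jj`, `(E_jk + E_kj)/√2`, `i (E_jk - E_kj)/√2` (`j < k`), which is
-- orthonormal for `(P, Q) ↦ Tr (P Q)`.
def hermitianOfCoords : EuclideanSpace ℝ (n × n) →ₗ[ℝ] Matrix n n ℂ where
  toFun x := Matrix.of fun j k =>
    if j = k then (x (j, j) : ℂ)
    else if j < k then (x (j, k) + x (k, j) * I) / Real.sqrt 2
    else (x (k, j) - x (j, k) * I) / Real.sqrt 2
  map_add' x y := by
    ext j k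
    simp only [of_apply, PiLp.add_apply, ofReal_add, add_apply]
    split_ifs <;> ring
  map_smul' r x := by
    ext j k
    simp only [of_apply, PiLp.smul_apply, smul_eq_mul, ofReal_mul, RingHom.id_apply, smul_apply,
      real_smul]
    split_ifs <;> ring

theorem hermitianOfCoords_apply (x : EuclideanSpace ℝ (n × n)) (j k : n) :
    hermitianOfCoords x j k =
      if j = k then (x (j, j) : ℂ)
      else if j < k then (x (j, k) + x (k, j) * I) / Real.sqrt 2
      else (x (k, j) - x (j, k) * I) / Real.sqrt 2 :=
  rfl

theorem isHermitian_hermitianOfCoords (x : EuclideanSpace ℝ (n × n)) :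
    (hermitianOfCoords x).IsHermitian := by
  ext j k
  simp only [conjTranspose_apply, hermitianOfCoords_apply]
  rcases lt_trichotomy j k with h | rfl | h
  · simp [h, h.ne, h.ne', h.not_gt]
  · simp
  · simp [h, h.ne, h.ne', h.not_gt, sub_eq_add_neg]

theorem hermitianOfCoords_mul_add_mul_swap (x y : EuclideanSpace ℝ (n × n)) (j k : n) :
    hermitianOfCoords x j k * hermitianOfCoords y k j +
        hermitianOfCoords x k j * hermitianOfCoords y j k =
      x (j, k) * y (j, k) + x (k, j) * y (k, j) := by
  have hsqrt : (Real.sqrt 2 : ℂ) ^ 2 = 2 := by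
    rw [← ofReal_pow, Real.sq_sqrt zero_le_two, ofReal_ofNat]
  have off_diag : ∀ j k : n, j < k → hermitianOfCoords x j k * hermitianOfCoords y k j +
      hermitianOfCoords x k j * hermitianOfCoords y j k =
        x (j, k) * y (j, k) + x (k, j) * y (k, j) := by
    intro j k h
    simp only [hermitianOfCoords_apply, h, h.ne, h.ne', h.not_gt, if_true, if_false]
    field_simp
    ring_nf
    simp only [I_sq, hsqrt]
    ring
  rcases lt_trichotomy j k with h | rfl | h
  · exact off_diag j k h
  · simp only [hermitianOfCoords_apply, if_true]
  · rw [add_comm, off_diag k j h, add_comm]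

theorem trace_hermitianOfCoords_mul [Fintype n] (x y : EuclideanSpace ℝ (n × n)) :
    (hermitianOfCoords x * hermitianOfCoords y).trace = ⟪x, y⟫ := by
  have hsum : ∑ j, ∑ k, ((x (j, k) * y (j, k) : ℝ) : ℂ) = ⟪x, y⟫ := by
    simp [PiLp.inner_apply, Fintype.sum_prod_type, mul_comm]
  have hswap : ∑ j, ∑ k, hermitianOfCoords x j k * hermitianOfCoords y k j =
      ∑ j, ∑ k, hermitianOfCoords x k j * hermitianOfCoords y j k := Finset.sum_comm
  suffices 2 * (hermitianOfCoords x * hermitianOfCoords y).trace = 2 * ⟪x, y⟫ by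
    exact_mod_cast mul_left_cancel₀ two_ne_zero this
  calc 2 * (hermitianOfCoords x * hermitianOfCoords y).trace
      = ∑ j, ∑ k, (hermitianOfCoords x j k * hermitianOfCoords y k j +
          hermitianOfCoords x k j * hermitianOfCoords y j k) := by
        simp only [trace, diag, mul_apply, Finset.sum_add_distrib, two_mul]
        rw [hswap]
    _ = ∑ j, ∑ k, ((x (j, k) * y (j, k) : ℝ) + (x (k, j) * y (k, j) : ℝ) : ℂ) := by
        simp only [hermitianOfCoords_mul_add_mul_swap, ofReal_mul]
    _ = 2 * ⟪x, y⟫ := by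
        simp only [Finset.sum_add_distrib, hsum]
        rw [Finset.sum_comm, hsum]
        ring

variable (n) in
def coordsOfOne : EuclideanSpace ℝ (n × n) :=
  WithLp.toLp 2 fun p => if p.1 = p.2 then 1 else 0

theorem hermitianOfCoords_coordsOfOne : hermitianOfCoords (coordsOfOne n) = 1 := by
  ext j k
  simp only [hermitianOfCoords_apply, coordsOfOne, one_apply]
  split_ifs <;> simp_all

end Matrix

section Hermitian

variable {m n : Type*}

theorem Matrix.IsHermitian.kronecker {A : Matrix m m ℂ} {B : Matrix n n ℂ}
    (hA : A.IsHermitian) (hB : B.IsHermitian) : (A ⊗ₖ B).IsHermitian := by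
  rw [IsHermitian, conjTranspose_kronecker, hA.eq, hB.eq]

theorem Matrix.IsHermitian.ofReal_re_trace_mul [Fintype n] {A B : Matrix n n ℂ}
    (hA : A.IsHermitian) (hB : B.IsHermitian) : ((A * B).trace.re : ℂ) = (A * B).trace := by
  rw [← conj_eq_iff_re, ← star_def, ← trace_conjTranspose, conjTranspose_mul, hA.eq, hB.eq,
    trace_mul_comm]

end Hermitian

section PartialTrace

variable {R m n : Type*} [CommSemiring R] [Fintype m] [Fintype n]

theorem Matrix.trace_kronecker_one_mul [DecidableEq n] (P : Matrix m m R)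
    (ψ : Matrix (m × n) (m × n) R) :
    ((P ⊗ₖ (1 : Matrix n n R)) * ψ).trace =
      (P * Matrix.of fun a a' => ∑ b, ψ (a, b) (a', b)).trace := by
  simp only [trace, diag_apply, mul_apply, kroneckerMap_apply, one_apply, mul_ite, mul_one,
    mul_zero, ite_mul, zero_mul, Fintype.sum_prod_type, Finset.sum_ite_eq, Finset.mem_univ,
    if_true, of_apply, Finset.mul_sum]
  exact Finset.sum_congr rfl fun _ _ => Finset.sum_comm

theorem Matrix.trace_one_kronecker_mul [DecidableEq m] (Q : Matrix n n R)
    (ψ : Matrix (m × n) (m × n) R) :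
    (((1 : Matrix m m R) ⊗ₖ Q) * ψ).trace =
      (Q * Matrix.of fun b b' => ∑ a, ψ (a, b) (a, b')).trace := by
  simp only [trace, diag_apply, mul_apply, kroneckerMap_apply, one_apply, ite_mul, one_mul,
    zero_mul, Fintype.sum_prod_type, Finset.sum_ite_irrel, Finset.sum_const_zero,
    Finset.sum_ite_eq, Finset.mem_univ, if_true, of_apply, Finset.mul_sum]
  rw [Finset.sum_comm]
  exact Finset.sum_congr rfl fun _ _ => Finset.sum_comm

end PartialTrace

section NormalizedCoordinates

variable {d : ℕ}

def hermitianOfCoordsN (d : ℕ) :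
    EuclideanSpace ℝ (Fin d × Fin d) →ₗ[ℝ] Matrix (Fin d) (Fin d) ℂ :=
  Real.sqrt d • hermitianOfCoords

def coordsNOfOne (d : ℕ) : EuclideanSpace ℝ (Fin d × Fin d) :=
  (Real.sqrt d)⁻¹ • coordsOfOne (Fin d)

theorem hermitianOfCoordsN_apply (x : EuclideanSpace ℝ (Fin d × Fin d)) :
    hermitianOfCoordsN d x = (Real.sqrt d : ℂ) • hermitianOfCoords x := by
  rw [hermitianOfCoordsN, LinearMap.smul_apply, RCLike.real_smul_eq_coe_smul (K := ℂ)]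
  rfl

theorem isHermitian_hermitianOfCoordsN (x : EuclideanSpace ℝ (Fin d × Fin d)) :
    (hermitianOfCoordsN d x).IsHermitian := by
  rw [hermitianOfCoordsN, LinearMap.smul_apply]
  exact (isHermitian_hermitianOfCoords x).smul (IsSelfAdjoint.all _)

theorem hermitianOfCoordsN_coordsNOfOne (hd : 0 < d) :
    hermitianOfCoordsN d (coordsNOfOne d) = 1 := by
  have : Real.sqrt d ≠ 0 := by positivity
  rw [coordsNOfOne, map_smul, hermitianOfCoordsN, LinearMap.smul_apply, smul_smul,
    inv_mul_cancel₀ this, one_smul, hermitianOfCoords_coordsOfOne]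

theorem innerN_hermitianOfCoordsN (hd : 0 < d) (x y : EuclideanSpace ℝ (Fin d × Fin d)) :
    innerN d (hermitianOfCoordsN d x) (hermitianOfCoordsN d y) = ⟪x, y⟫ := by
  have hd' : (d : ℂ) ≠ 0 := by exact_mod_cast hd.ne'
  have hsqrt : (Real.sqrt d : ℂ) * Real.sqrt d = d := by
    rw [← ofReal_mul, Real.mul_self_sqrt d.cast_nonneg, ofReal_natCast]
  rw [innerN, (isHermitian_hermitianOfCoordsN x).eq, hermitianOfCoordsN_apply,
    hermitianOfCoordsN_apply, smul_mul_smul_comm, trace_smul, trace_hermitianOfCoords_mul,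
    smul_eq_mul, hsqrt, mul_div_cancel_left₀ _ hd']

theorem norm_coordsNOfOne (hd : 0 < d) : ‖coordsNOfOne d‖ = 1 := by
  have h := innerN_hermitianOfCoordsN hd (coordsNOfOne d) (coordsNOfOne d)
  rw [hermitianOfCoordsN_coordsNOfOne hd, innerN, conjTranspose_one, one_mul, trace_one,
    Fintype.card_fin, div_self (by exact_mod_cast hd.ne'), real_inner_self_eq_norm_sq] at h
  exact (pow_eq_one_iff_of_nonneg (norm_nonneg _) two_ne_zero).mp (by exact_mod_cast h.symm)

theorem linearIndependent_of_innerN {ι : Type*} [Fintype ι] [DecidableEq ι]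
    {v : ι → Matrix (Fin d) (Fin d) ℂ}
    (hv : ∀ i j, innerN d (v i) (v j) = if i = j then 1 else 0) :
    LinearIndependent ℂ v := by
  have innerN_sum :
      ∀ P (g : ι → ℂ), innerN d P (∑ i, g i • v i) = ∑ i, g i * innerN d P (v i) := by
    simp [innerN, Matrix.mul_sum, trace_sum, Finset.sum_div, mul_div_assoc]
  rw [Fintype.linearIndependent_iff]
  intro g hg j
  have h : innerN d (v j) (∑ i, g i • v i) = g j := by simp [innerN_sum, hv]
  simpa [hg, innerN] using h.symm

theorem isStdONB_hermitianOfCoordsN (hd : 0 < d)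
    (b : OrthonormalBasis (Fin (d ^ 2)) ℝ (EuclideanSpace ℝ (Fin d × Fin d)))
    (hb : ∀ i : Fin (d ^ 2), (i : ℕ) = 0 → b i = coordsNOfOne d) :
    IsStdONB d fun i => hermitianOfCoordsN d (b i) := by
  have horth : ∀ i j, innerN d (hermitianOfCoordsN d (b i)) (hermitianOfCoordsN d (b j)) =
      if i = j then 1 else 0 := by
    intro i j
    rw [innerN_hermitianOfCoordsN hd, orthonormal_iff_ite.mp b.orthonormal]
    split_ifs <;> simp
  refine ⟨fun i => isHermitian_hermitianOfCoordsN _,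
    fun i hi => (congrArg _ (hb i hi)).trans (hermitianOfCoordsN_coordsNOfOne hd), horth, ?_⟩
  exact (linearIndependent_of_innerN horth).span_eq_top_of_card_eq_finrank'
    (by simp [Module.finrank_matrix, sq])

end NormalizedCoordinates

section Correlation

variable {dA dB : ℕ}

-- The correlation matrix `M_{αβ} = Tr ((A_α ⊗ B_β) ψ)` of the paper, in coordinates.
def correlationForm (ψ : Matrix (Fin dA × Fin dB) (Fin dA × Fin dB) ℂ) :
    EuclideanSpace ℝ (Fin dA × Fin dA) →ₗ[ℝ]
      EuclideanSpace ℝ (Fin dB × Fin dB) →ₗ[ℝ] ℝ :=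
  ((kroneckerBilinear (R := ℝ)).compl₁₂
      (hermitianOfCoordsN dA) (hermitianOfCoordsN dB)).compr₂
    (reLm ∘ₗ traceLinearMap _ ℝ ℂ ∘ₗ LinearMap.mulRight ℝ ψ)

theorem correlationForm_apply (ψ : Matrix (Fin dA × Fin dB) (Fin dA × Fin dB) ℂ) (x y) :
    correlationForm ψ x y =
      ((hermitianOfCoordsN dA x ⊗ₖ hermitianOfCoordsN dB y) * ψ).trace.re :=
  rfl

theorem trace_kronecker_one_mul_eq_innerN {ψ : Matrix (Fin dA × Fin dB) (Fin dA × Fin dB) ℂ}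
    (hmargA : Matrix.of (fun a a' : Fin dA => ∑ b, ψ (a, b) (a', b)) =
      (dA : ℂ)⁻¹ • (1 : Matrix (Fin dA) (Fin dA) ℂ))
    (P : Matrix (Fin dA) (Fin dA) ℂ) :
    ((P ⊗ₖ (1 : Matrix (Fin dB) (Fin dB) ℂ)) * ψ).trace = innerN dA 1 P := by
  rw [trace_kronecker_one_mul, hmargA, mul_smul_comm, mul_one, trace_smul, innerN,
    conjTranspose_one, one_mul, smul_eq_mul, inv_mul_eq_div]

theorem trace_one_kronecker_mul_eq_innerN {ψ : Matrix (Fin dA × Fin dB) (Fin dA × Fin dB) ℂ}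
    (hmargB : Matrix.of (fun b b' : Fin dB => ∑ a, ψ (a, b) (a, b')) =
      (dB : ℂ)⁻¹ • (1 : Matrix (Fin dB) (Fin dB) ℂ))
    (Q : Matrix (Fin dB) (Fin dB) ℂ) :
    (((1 : Matrix (Fin dA) (Fin dA) ℂ) ⊗ₖ Q) * ψ).trace = innerN dB 1 Q := by
  rw [trace_one_kronecker_mul, hmargB, mul_smul_comm, mul_one, trace_smul, innerN,
    conjTranspose_one, one_mul, smul_eq_mul, inv_mul_eq_div]

theorem correlationForm_coordsNOfOne_left (hA : 0 < dA) (hB : 0 < dB)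
    {ψ : Matrix (Fin dA × Fin dB) (Fin dA × Fin dB) ℂ}
    (hmargB : Matrix.of (fun b b' : Fin dB => ∑ a, ψ (a, b) (a, b')) =
      (dB : ℂ)⁻¹ • (1 : Matrix (Fin dB) (Fin dB) ℂ))
    (y : EuclideanSpace ℝ (Fin dB × Fin dB)) :
    correlationForm ψ (coordsNOfOne dA) y = ⟪coordsNOfOne dB, y⟫ := by
  rw [correlationForm_apply, hermitianOfCoordsN_coordsNOfOne hA,
    trace_one_kronecker_mul_eq_innerN hmargB, ← hermitianOfCoordsN_coordsNOfOne hB,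
    innerN_hermitianOfCoordsN hB, ofReal_re]

theorem correlationForm_coordsNOfOne_right (hA : 0 < dA) (hB : 0 < dB)
    {ψ : Matrix (Fin dA × Fin dB) (Fin dA × Fin dB) ℂ}
    (hmargA : Matrix.of (fun a a' : Fin dA => ∑ b, ψ (a, b) (a', b)) =
      (dA : ℂ)⁻¹ • (1 : Matrix (Fin dA) (Fin dA) ℂ))
    (x : EuclideanSpace ℝ (Fin dA × Fin dA)) :
    correlationForm ψ x (coordsNOfOne dB) = ⟪coordsNOfOne dA, x⟫ := by
  rw [correlationForm_apply, hermitianOfCoordsN_coordsNOfOne hB,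
    trace_kronecker_one_mul_eq_innerN hmargA, ← hermitianOfCoordsN_coordsNOfOne hA,
    innerN_hermitianOfCoordsN hA, ofReal_re]

end Correlation

theorem exists_diagonalizing_bases_general (dA dB : ℕ) (hA : 0 < dA) (hB : 0 < dB)
    (ψ : Matrix (Fin dA × Fin dB) (Fin dA × Fin dB) ℂ)
    (hpsd : ψ.PosSemidef)
    (hmargA : Matrix.of (fun a a' : Fin dA => ∑ b, ψ (a, b) (a', b)) =
      (dA : ℂ)⁻¹ • (1 : Matrix (Fin dA) (Fin dA) ℂ))
    (hmargB : Matrix.of (fun b b' : Fin dB => ∑ a, ψ (a, b) (a, b')) =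
      (dB : ℂ)⁻¹ • (1 : Matrix (Fin dB) (Fin dB) ℂ)) :
    ∃ (X : Fin (dA ^ 2) → Matrix (Fin dA) (Fin dA) ℂ)
      (Y : Fin (dB ^ 2) → Matrix (Fin dB) (Fin dB) ℂ),
      IsStdONB dA X ∧ IsStdONB dB Y ∧
      ∀ (α : Fin (dA ^ 2)) (β : Fin (dB ^ 2)), (α : ℕ) ≠ (β : ℕ) →
        Matrix.trace ((X α ⊗ₖ Y β) * ψ) = 0 := by
  obtain ⟨x, y, hx, hy, hxy⟩ := (correlationForm ψ).exists_svd_of_apply_eq_inner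
    (n := dA ^ 2) (m := dB ^ 2) (by simp [sq]) (by simp [sq])
    (norm_coordsNOfOne hA) (norm_coordsNOfOne hB)
    (correlationForm_coordsNOfOne_left hA hB hmargB)
    (correlationForm_coordsNOfOne_right hA hB hmargA)
  refine ⟨_, _, isStdONB_hermitianOfCoordsN hA x hx, isStdONB_hermitianOfCoordsN hB y hy,
    fun α β hαβ => ?_⟩
  have hXY := (isHermitian_hermitianOfCoordsN (x α)).kronecker
    (isHermitian_hermitianOfCoordsN (y β))
  rw [← hXY.ofReal_re_trace_mul hpsd.1, ← correlationForm_apply, hxy α β hαβ, ofReal_zero]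

/-- For a bipartite density operator with maximally mixed marginals, there are standard
orthonormal bases `{X_α}` of `M(A)` and `{Y_β}` of `M(B)` such that
`Tr((X_α ⊗ Y_β) ψ) = 0` whenever `α ≠ β`. -/
theorem exists_diagonalizing_bases (dA dB : ℕ) (hA : 0 < dA) (hB : 0 < dB)
    (ψ : Matrix (Fin dA × Fin dB) (Fin dA × Fin dB) ℂ)
    (hpsd : ψ.PosSemidef) (htr : ψ.trace = 1)
    (hmargA : Matrix.of (fun a a' : Fin dA => ∑ b, ψ (a, b) (a', b)) =
      (dA : ℂ)⁻¹ • (1 : Matrix (Fin dA) (Fin dA) ℂ))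
    (hmargB : Matrix.of (fun b b' : Fin dB => ∑ a, ψ (a, b) (a, b')) =
      (dB : ℂ)⁻¹ • (1 : Matrix (Fin dB) (Fin dB) ℂ)) :
    ∃ (X : Fin (dA ^ 2) → Matrix (Fin dA) (Fin dA) ℂ)
      (Y : Fin (dB ^ 2) → Matrix (Fin dB) (Fin dB) ℂ),
      IsStdONB dA X ∧ IsStdONB dB Y ∧
      ∀ (α : Fin (dA ^ 2)) (β : Fin (dB ^ 2)), (α : ℕ) ≠ (β : ℕ) →
        Matrix.trace ((X α ⊗ₖ Y β) * ψ) = 0 :=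
  exists_diagonalizing_bases_general dA dB hA hB ψ hpsd hmargA hmargB
end
end

section
/- Let P be a positive definite matrix and Q any matrix of the same dimension. Then the unique solution of the Lyapunov equation P X + X P = Q is given by L(P,Q) = ∫₀^∞ e^{-tP} Q e^{-tP} dt. -/
/-!
Diagonalise `P = U D U*` with `U` unitary and `D = diag(λ)`, `λ > 0`. Conjugation by `U` turns
`P Y + Y P = Q` into the decoupled equations `(λ_k + λ_l) Y'_{kl} = Q'_{kl}`, which have exactly one
solution, and turns the integrand into `e^{-(λ_k + λ_l) t} Q'_{kl}`, whose integral over `(0, ∞)`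
is that same solution `Q'_{kl} / (λ_k + λ_l)`.
-/

open Matrix MeasureTheory Unitary
open scoped ComplexOrder

noncomputable section

theorem integral_exp_neg_mul_Ioi_zero {a : ℝ} (ha : 0 < a) :
    ∫ t in Set.Ioi (0 : ℝ), Real.exp (-a * t) = a⁻¹ := by
  have := integral_exp_mul_Ioi (neg_neg_of_pos ha) 0
  rwa [mul_zero, Real.exp_zero, neg_div, div_neg, neg_neg, one_div] at this

namespace Matrix

variable {𝕜 : Type*} [RCLike 𝕜]

theorem integral_mul_mul_apply {α l m n p : Type*} [MeasurableSpace α] {μ : Measure α}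
    [Fintype m] [Fintype n] (A : Matrix l m 𝕜) (F : α → Matrix m n 𝕜) (B : Matrix n p 𝕜)
    (hF : ∀ k k', Integrable (fun t => F t k k') μ) (i : l) (j : p) :
    ∫ t, (A * F t * B) i j ∂μ = (A * (of fun k k' => ∫ t, F t k k' ∂μ) * B) i j := by
  simp only [mul_apply, Finset.sum_mul, of_apply]
  rw [integral_finsetSum _ fun k' _ => integrable_finsetSum _ fun k _ =>
    ((hF k k').const_mul _).mul_const _]
  refine Finset.sum_congr rfl fun k' _ => ?_
  rw [integral_finsetSum _ fun k _ => ((hF k k').const_mul _).mul_const _]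
  refine Finset.sum_congr rfl fun k _ => ?_
  rw [integral_mul_const, integral_const_mul]

variable {n : Type*} [Fintype n] [DecidableEq n]

theorem diagonal_mul_add_mul_diagonal_apply {R : Type*} [CommSemiring R] (μ : n → R)
    (Y : Matrix n n R) (k l : n) :
    (diagonal μ * Y + Y * diagonal μ) k l = (μ k + μ l) * Y k l := by
  rw [add_apply, diagonal_mul, mul_diagonal, add_mul, mul_comm (Y k l)]

theorem diagonal_mul_add_mul_diagonal_eq_iff {K : Type*} [Field K] {μ : n → K}
    (hμ : ∀ k l, μ k + μ l ≠ 0) {Y Q : Matrix n n K} :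
    diagonal μ * Y + Y * diagonal μ = Q ↔ Y = of fun k l => (μ k + μ l)⁻¹ * Q k l := by
  simp only [← Matrix.ext_iff, diagonal_mul_add_mul_diagonal_apply, of_apply]
  exact forall₂_congr fun k l => (eq_inv_mul_iff_mul_eq₀ (hμ k l)).symm

theorem exp_conjStarAlgAut (u : unitary (Matrix n n 𝕜)) (A : Matrix n n 𝕜) :
    NormedSpace.exp (conjStarAlgAut 𝕜 _ u A) = conjStarAlgAut 𝕜 _ u (NormedSpace.exp A) := by
  simpa using exp_units_conj (toUnits u) A

theorem IsHermitian.exp_smul {A : Matrix n n 𝕜} (hA : A.IsHermitian) (s : ℝ) :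
    NormedSpace.exp (s • A) = conjStarAlgAut 𝕜 _ hA.eigenvectorUnitary
      (diagonal fun k => (Real.exp (s * hA.eigenvalues k) : 𝕜)) := by
  conv_lhs => rw [hA.spectral_theorem, RCLike.real_smul_eq_coe_smul (K := 𝕜), ← map_smul,
    exp_conjStarAlgAut, ← diagonal_smul, exp_diagonal]
  congr 2
  ext k
  rw [Pi.coe_exp, Pi.smul_apply, Function.comp_apply, smul_eq_mul, ← RCLike.ofReal_mul,
    Real.exp_eq_exp_ℝ]
  exact (NormedSpace.algebraMap_exp_comm _).symm

namespace PosDef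

variable {P : Matrix n n 𝕜} (hP : P.PosDef)

def lyapunovSolution (Q : Matrix n n 𝕜) : Matrix n n 𝕜 :=
  conjStarAlgAut 𝕜 _ hP.1.eigenvectorUnitary <| of fun k l =>
    ((hP.1.eigenvalues k : 𝕜) + hP.1.eigenvalues l)⁻¹ *
      conjStarAlgAut 𝕜 _ (star hP.1.eigenvectorUnitary) Q k l

include hP in
theorem eigenvalues_add_pos (k l : n) : 0 < hP.1.eigenvalues k + hP.1.eigenvalues l :=
  add_pos (hP.eigenvalues_pos k) (hP.eigenvalues_pos l)

theorem mul_add_mul_eq_iff_eq_lyapunovSolution {Y Q : Matrix n n 𝕜} :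
    P * Y + Y * P = Q ↔ Y = hP.lyapunovSolution Q := by
  set φ := conjStarAlgAut 𝕜 (Matrix n n 𝕜) (star hP.1.eigenvectorUnitary)
  have hφ_symm : φ.symm = conjStarAlgAut 𝕜 _ hP.1.eigenvectorUnitary := by
    rw [conjStarAlgAut_symm, star_star]
  have hμ : ∀ k l,
      (RCLike.ofReal ∘ hP.1.eigenvalues) k + (RCLike.ofReal ∘ hP.1.eigenvalues) l ≠ (0 : 𝕜) :=
    fun k l => by simpa only [Function.comp_apply, RCLike.ofReal_add] using
      (RCLike.ofReal_ne_zero (K := 𝕜)).2 (hP.eigenvalues_add_pos k l).ne'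
  rw [← (EquivLike.injective φ).eq_iff, map_add, map_mul, map_mul,
    hP.1.conjStarAlgAut_star_eigenvectorUnitary, diagonal_mul_add_mul_diagonal_eq_iff hμ,
    lyapunovSolution, ← hφ_symm, StarAlgEquiv.eq_symm_apply]
  rfl

theorem integral_exp_neg_smul_mul_mul_exp_neg_smul_apply (Q : Matrix n n 𝕜) (i j : n) :
    ∫ t in Set.Ioi (0 : ℝ), (NormedSpace.exp (-(t • P)) * Q * NormedSpace.exp (-(t • P))) i j =
      hP.lyapunovSolution Q i j := by
  set U := hP.1.eigenvectorUnitary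
  set Q' := conjStarAlgAut 𝕜 _ (star U) Q
  let F (t : ℝ) : Matrix n n 𝕜 := of fun k l =>
    (Real.exp (-(hP.1.eigenvalues k + hP.1.eigenvalues l) * t) : 𝕜) * Q' k l
  have hQ' : conjStarAlgAut 𝕜 _ U Q' = Q := by
    rw [← conjStarAlgAut_mul_apply, mul_star_self, map_one, StarAlgEquiv.one_apply]
  have hconj (t : ℝ) : NormedSpace.exp (-(t • P)) * Q * NormedSpace.exp (-(t • P)) =
      U * F t * (star U : Matrix n n 𝕜) := by
    rw [← neg_smul, hP.1.exp_smul, ← hQ', ← map_mul, ← map_mul, conjStarAlgAut_apply]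
    congr 2
    ext k l
    simp only [F, mul_diagonal, diagonal_mul, of_apply]
    rw [mul_right_comm, ← RCLike.ofReal_mul, ← Real.exp_add]
    ring_nf
  have hF_int (k l : n) : Integrable (fun t => F t k l) (volume.restrict (Set.Ioi 0)) :=
    (exp_neg_integrableOn_Ioi 0 (hP.eigenvalues_add_pos k l)).ofReal.mul_const _
  have hF_integral : (of fun k l => ∫ t in Set.Ioi 0, F t k l) =
      of fun k l => ((hP.1.eigenvalues k : 𝕜) + hP.1.eigenvalues l)⁻¹ * Q' k l := by
    ext k l
    simp only [F, of_apply]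
    rw [integral_mul_const, integral_ofReal,
      integral_exp_neg_mul_Ioi_zero (hP.eigenvalues_add_pos k l)]
    push_cast
    rfl
  simp_rw [hconj]
  rw [integral_mul_mul_apply _ F _ hF_int, hF_integral]
  rfl

end PosDef

end Matrix

/-- For positive definite `P`, the unique solution of the Lyapunov equation `P X + X P = Q`
is `L(P,Q) = ∫₀^∞ e^{-tP} Q e^{-tP} dt` (entrywise Bochner integral). -/
theorem lyapunov_solution_integral (d : ℕ) (P Q : Matrix (Fin d) (Fin d) ℂ)
    (hP : P.PosDef)
    (X : Matrix (Fin d) (Fin d) ℂ)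
    (hX : ∀ i j, X i j = ∫ t in Set.Ioi (0 : ℝ),
      (NormedSpace.exp (-(t • P)) * Q * NormedSpace.exp (-(t • P))) i j) :
    P * X + X * P = Q ∧ ∀ Y : Matrix (Fin d) (Fin d) ℂ, P * Y + Y * P = Q → Y = X := by
  have hX_eq : X = hP.lyapunovSolution Q := by
    ext i j
    rw [hX, hP.integral_exp_neg_smul_mul_mul_exp_neg_smul_apply]
  exact ⟨hP.mul_add_mul_eq_iff_eq_lyapunovSolution.2 hX_eq,
    fun Y hY => (hP.mul_add_mul_eq_iff_eq_lyapunovSolution.1 hY).trans hX_eq.symm⟩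
end
end

section
/- Define ζ: ℝ → ℝ by ζ(x) = x² for x ≤ 0, ζ(x) = (x-1)² for x ≥ 1, and ζ(x) = 0 for 0 ≤ x ≤ 1. For M ∈ H_d Hermitian, applying ζ via functional calculus, Tr ζ(M) equals the squared Frobenius-distance from M to the convex set Δ = {X Hermitian : 0 ≤ X ≤ Id}, i.e., Tr ζ(M) = min_{X ∈ Δ} ‖M - X‖₂². -/
open Matrix
open scoped ComplexOrder

noncomputable section

/-- `ζ(x) = x²` for `x ≤ 0`, `(x-1)²` for `x ≥ 1`, and `0` on `[0,1]`. -/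
def zeta (x : ℝ) : ℝ :=
  if x ≤ 0 then x ^ 2 else if 1 ≤ x then (x - 1) ^ 2 else 0

/-! Diagonalise `M = U D U*`. Conjugation by the unitary `U` preserves both the set
`Δ = {X : 0 ≤ X ≤ 1}` and the Frobenius norm, so it suffices to compare `D` with `Y = U* X U ∈ Δ`.
The diagonal entries `Y i i` are real numbers in `[0, 1]`, hence
`‖D - Y‖₂² ≥ ∑ |λᵢ - Y i i|² ≥ ∑ dist(λᵢ, [0,1])² = ∑ ζ(λᵢ)`,
with equality when `Y` is the diagonal matrix of the `λᵢ` clamped to `[0, 1]`. -/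

open Set Unitary

lemma zeta_eq_sq_sub_projIcc (x : ℝ) : zeta x = (x - projIcc 0 1 zero_le_one x) ^ 2 := by
  unfold zeta
  split_ifs with h0 h1
  · rw [projIcc_of_le_left _ h0]; ring
  · rw [projIcc_of_right_le _ h1]
  · rw [projIcc_of_mem _ ⟨(not_le.1 h0).le, (not_le.1 h1).le⟩]; ring

lemma zeta_le_sq_sub {x t : ℝ} (ht : t ∈ Icc (0 : ℝ) 1) : zeta x ≤ (x - t) ^ 2 := by
  obtain ⟨ht0, ht1⟩ := ht
  unfold zeta
  split_ifs <;> nlinarith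

lemma zeta_le_normSq_sub {x : ℝ} {z : ℂ} (hz0 : 0 ≤ z) (hz1 : z ≤ 1) :
    zeta x ≤ Complex.normSq (x - z) := by
  have hre : z.re ∈ Icc (0 : ℝ) 1 := ⟨(Complex.le_def.1 hz0).1, (Complex.le_def.1 hz1).1⟩
  calc zeta x ≤ (x - z.re) ^ 2 := zeta_le_sq_sub hre
    _ = (x - z).re * (x - z).re := by simp [sq]
    _ ≤ Complex.normSq (x - z) := Complex.re_sq_le_normSq _

section Frobenius

variable {m n : Type*} [Fintype m] [Fintype n]

lemma re_trace_conjTranspose_mul_self (A : Matrix m n ℂ) :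
    (Aᴴ * A).trace.re = ∑ i, ∑ j, Complex.normSq (A j i) := by
  simp only [trace, diag, mul_apply, conjTranspose_apply, Complex.re_sum, RCLike.star_def,
    ← Complex.normSq_eq_conj_mul_self, Complex.ofReal_re]

lemma sum_normSq_diag_le_re_trace_conjTranspose_mul_self (A : Matrix n n ℂ) :
    ∑ i, Complex.normSq (A i i) ≤ (Aᴴ * A).trace.re := by
  rw [re_trace_conjTranspose_mul_self]
  exact Finset.sum_le_sum fun i _ ↦
    Finset.single_le_sum (f := fun j ↦ Complex.normSq (A j i))
      (fun j _ ↦ Complex.normSq_nonneg _) (Finset.mem_univ i)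

variable [DecidableEq n]

lemma re_trace_conjTranspose_mul_self_diagonal (v : n → ℝ) :
    ((diagonal (Complex.ofReal ∘ v))ᴴ * diagonal (Complex.ofReal ∘ v)).trace.re = ∑ i, v i ^ 2 := by
  simp [diagonal_conjTranspose, trace_diagonal, Complex.re_sum, sq]

end Frobenius

section UnitaryConj

variable {n : Type*} [Fintype n] [DecidableEq n]

lemma trace_conjStarAlgAut {R : Type*} [CommRing R] [StarRing R] (U : unitary (Matrix n n R))
    (A : Matrix n n R) : (conjStarAlgAut R _ U A).trace = A.trace := by
  rw [conjStarAlgAut_apply, trace_mul_cycle, coe_star_mul_self, one_mul]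

lemma trace_conjTranspose_mul_self_conjStarAlgAut {R : Type*} [CommRing R] [StarRing R]
    (U : unitary (Matrix n n R)) (A : Matrix n n R) :
    ((conjStarAlgAut R _ U A)ᴴ * conjStarAlgAut R _ U A).trace = (Aᴴ * A).trace := by
  rw [← star_eq_conjTranspose, ← map_star, ← map_mul, trace_conjStarAlgAut, star_eq_conjTranspose]

lemma Matrix.PosSemidef.conjStarAlgAut {R : Type*} [CommRing R] [PartialOrder R] [StarRing R]
    {X : Matrix n n R} (hX : X.PosSemidef) (U : unitary (Matrix n n R)) :
    (conjStarAlgAut R _ U X).PosSemidef := by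
  rw [conjStarAlgAut_apply, star_eq_conjTranspose]
  exact hX.mul_mul_conjTranspose_same _

end UnitaryConj

namespace Matrix.IsHermitian

variable {n : Type*} [Fintype n] [DecidableEq n] {M : Matrix n n ℂ}

lemma sum_zeta_eigenvalues_le (hM : M.IsHermitian) {X : Matrix n n ℂ} (hX : X.PosSemidef)
    (h1X : (1 - X).PosSemidef) :
    ∑ i, zeta (hM.eigenvalues i) ≤ ((M - X)ᴴ * (M - X)).trace.re := by
  set U := hM.eigenvectorUnitary
  set D := diagonal (Complex.ofReal ∘ hM.eigenvalues)
  have hM_eq : M = conjStarAlgAut ℂ _ U D := hM.spectral_theorem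
  set Y := (conjStarAlgAut ℂ _ U).symm X
  have hY : Y.PosSemidef := by
    simpa only [Y, conjStarAlgAut_symm] using hX.conjStarAlgAut (star U)
  have h1Y : (1 - Y).PosSemidef := by
    simpa only [Y, conjStarAlgAut_symm, map_sub, map_one] using h1X.conjStarAlgAut (star U)
  have hY_le_one (i : n) : Y i i ≤ 1 := by
    simpa only [Matrix.sub_apply, one_apply_eq, sub_nonneg] using h1Y.diag_nonneg (i := i)
  calc ∑ i, zeta (hM.eigenvalues i)
      ≤ ∑ i, Complex.normSq ((D - Y) i i) :=
        Finset.sum_le_sum fun i _ ↦ by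
          simpa only [D, Matrix.sub_apply, diagonal_apply_eq, Function.comp_apply]
            using zeta_le_normSq_sub hY.diag_nonneg (hY_le_one i)
    _ ≤ ((D - Y)ᴴ * (D - Y)).trace.re := sum_normSq_diag_le_re_trace_conjTranspose_mul_self _
    _ = ((M - X)ᴴ * (M - X)).trace.re := by
        rw [← trace_conjTranspose_mul_self_conjStarAlgAut U, map_sub,
          ← hM_eq, StarAlgEquiv.apply_symm_apply]

lemma exists_sum_zeta_eigenvalues_eq (hM : M.IsHermitian) :
    ∃ X : Matrix n n ℂ, X.PosSemidef ∧ (1 - X).PosSemidef ∧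
      ∑ i, zeta (hM.eigenvalues i) = ((M - X)ᴴ * (M - X)).trace.re := by
  set U := hM.eigenvectorUnitary
  set ev := hM.eigenvalues
  have hM_eq : M = conjStarAlgAut ℂ _ U (diagonal (Complex.ofReal ∘ ev)) := hM.spectral_theorem
  set c : n → ℝ := fun i ↦ projIcc 0 1 zero_le_one (ev i)
  have hc (i : n) : c i ∈ Icc (0 : ℝ) 1 := (projIcc 0 1 zero_le_one (ev i)).2
  have h1 : (1 : Matrix n n ℂ) - diagonal (Complex.ofReal ∘ c)
      = diagonal (Complex.ofReal ∘ (1 - c)) := by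
    ext i j; by_cases h : i = j <;> simp [h]
  have h2 : diagonal (Complex.ofReal ∘ ev) - diagonal (Complex.ofReal ∘ c)
      = diagonal (Complex.ofReal ∘ (ev - c)) := by
    ext i j; by_cases h : i = j <;> simp [h]
  refine ⟨conjStarAlgAut ℂ _ U (diagonal (Complex.ofReal ∘ c)), ?_, ?_, ?_⟩
  · exact (PosSemidef.diagonal fun i ↦ Complex.zero_le_real.2 (hc i).1).conjStarAlgAut U
  · rw [← map_one (conjStarAlgAut ℂ _ U), ← map_sub, h1]
    exact (PosSemidef.diagonal fun i ↦
      Complex.zero_le_real.2 (sub_nonneg.2 (hc i).2)).conjStarAlgAut U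
  · rw [hM_eq, ← map_sub, trace_conjTranspose_mul_self_conjStarAlgAut, h2,
      re_trace_conjTranspose_mul_self_diagonal]
    simp only [zeta_eq_sq_sub_projIcc, Pi.sub_apply, c, ev]

end Matrix.IsHermitian

/-- For Hermitian `M`, `Tr ζ(M)` (computed via the spectrum) is the minimum squared
Frobenius distance from `M` to the convex set `Δ = {X : 0 ≤ X ≤ Id}`. -/
theorem trace_zeta_eq_dist_sq (d : ℕ) (M : Matrix (Fin d) (Fin d) ℂ)
    (hM : M.IsHermitian) :
    IsLeast
      {r : ℝ | ∃ X : Matrix (Fin d) (Fin d) ℂ,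
        X.PosSemidef ∧ ((1 : Matrix (Fin d) (Fin d) ℂ) - X).PosSemidef ∧
        r = (Matrix.trace ((M - X)ᴴ * (M - X))).re}
      (∑ i, zeta (hM.eigenvalues i)) := by
  refine ⟨hM.exists_sum_zeta_eigenvalues_eq, ?_⟩
  rintro _ ⟨X, hX, h1X, rfl⟩
  exact hM.sum_zeta_eigenvalues_le hX h1X
end
end

section
/- For Hermitian matrices P and Q with P, P+Q acting via a continuously differentiable spectral functional calculus of ζ, it holds that |Tr(ζ(P+Q) - ζ(P))| ≤ 4(‖P‖₂‖Q‖₂ + ‖Q‖₂²), where ‖·‖₂ is the Frobenius norm and ζ(x) = x² for x ≤ 0, (x-1)² for x ≥ 1, and 0 otherwise. -/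
open Matrix

noncomputable section

/-- Frobenius norm `‖M‖₂ = (Tr M†M)^{1/2}`. -/
def fnorm {d : ℕ} (M : Matrix (Fin d) (Fin d) ℂ) : ℝ :=
  Real.sqrt ((Matrix.trace (Mᴴ * M)).re)

/-! Write `ζ = g² + h²` with `g x = min x 0` and `h x = max (x - 1) 0`; both are 1-Lipschitz and
satisfy `|g x|, |h x| ≤ |x|`, and `Tr ζ(M) = ‖g(M)‖₂² + ‖h(M)‖₂²`.
For `A = U diag(λ) U*`, `B = V diag(μ) V*` and `W = U* V`, unitary invariance of the Frobenius norm
gives `‖f(A) - k(B)‖₂² = ∑ᵢⱼ |Wᵢⱼ|² (f λᵢ - k μⱼ)²`, so a `K`-Lipschitz `f` is `K`-Lipschitz on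
Hermitian matrices in the Frobenius norm, and `‖g(M)‖₂ ≤ ‖M‖₂`.
Finally `|‖X‖² - ‖Y‖²| ≤ ‖X - Y‖ (‖X - Y‖ + 2‖Y‖)` with `X = g(P + Q)`, `Y = g(P)` (and likewise
for `h`) bounds each half by `‖Q‖₂ (‖Q‖₂ + 2‖P‖₂)`. -/

lemma abs_norm_sq_sub_norm_sq_le {E : Type*} [SeminormedAddCommGroup E] (x y : E) :
    |‖x‖ ^ 2 - ‖y‖ ^ 2| ≤ ‖x - y‖ * (‖x - y‖ + 2 * ‖y‖) := by
  rw [sq_sub_sq, abs_mul, abs_of_nonneg (by positivity), mul_comm]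
  exact mul_le_mul (abs_norm_sub_norm_le x y)
    (by linarith [norm_le_norm_sub_add x y, norm_nonneg y]) (by positivity) (norm_nonneg _)

attribute [local instance] Matrix.frobeniusNormedAddCommGroup

variable {𝕜 α m n : Type*} [RCLike 𝕜] [NormedAddCommGroup α] [Fintype m] [Fintype n]

lemma frobenius_norm_sq (A : Matrix m n α) : ‖A‖ ^ 2 = ∑ i, ∑ j, ‖A i j‖ ^ 2 := by
  rw [frobenius_norm_def, ← Real.sqrt_eq_rpow, Real.sq_sqrt (by positivity)]
  simp only [Real.rpow_two]

lemma trace_conjTranspose_mul_self_eq_frobenius_norm_sq (A : Matrix m n 𝕜) :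
    trace (Aᴴ * A) = ((‖A‖ ^ 2 : ℝ) : 𝕜) := by
  rw [frobenius_norm_sq, Finset.sum_comm]
  push_cast
  simp only [trace, diag_apply, mul_apply, conjTranspose_apply, RCLike.star_def, RCLike.conj_mul]

lemma frobenius_norm_eq_sqrt_re_trace (A : Matrix m n 𝕜) :
    ‖A‖ = √(RCLike.re (trace (Aᴴ * A))) := by
  rw [trace_conjTranspose_mul_self_eq_frobenius_norm_sq, RCLike.ofReal_re,
    Real.sqrt_sq (norm_nonneg A)]

lemma frobenius_norm_unitary_mul [DecidableEq m] {U : Matrix m m 𝕜} (hU : U ∈ unitaryGroup m 𝕜)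
    (A : Matrix m n 𝕜) : ‖U * A‖ = ‖A‖ := by
  rw [frobenius_norm_eq_sqrt_re_trace, frobenius_norm_eq_sqrt_re_trace, conjTranspose_mul,
    Matrix.mul_assoc, ← Matrix.mul_assoc Uᴴ, ← star_eq_conjTranspose,
    (mem_unitaryGroup_iff'.mp hU), Matrix.one_mul]

lemma frobenius_norm_mul_unitary [DecidableEq n] {U : Matrix n n 𝕜} (hU : U ∈ unitaryGroup n 𝕜)
    (A : Matrix m n 𝕜) : ‖A * U‖ = ‖A‖ := by
  rw [← frobenius_norm_conjTranspose, conjTranspose_mul, ← star_eq_conjTranspose,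
    frobenius_norm_unitary_mul (Unitary.star_mem hU), frobenius_norm_conjTranspose]

lemma frobenius_norm_sq_diagonal_mul_sub_mul_diagonal [DecidableEq n] (a b : n → 𝕜)
    (W : Matrix n n 𝕜) :
    ‖diagonal a * W - W * diagonal b‖ ^ 2 = ∑ i, ∑ j, ‖a i - b j‖ ^ 2 * ‖W i j‖ ^ 2 := by
  rw [frobenius_norm_sq]
  simp only [Matrix.sub_apply, diagonal_mul, mul_diagonal, ← sub_mul, mul_comm (W _ _), norm_mul,
    mul_pow]

namespace Matrix.IsHermitian

variable [DecidableEq n] {A B : Matrix n n 𝕜} (hA : A.IsHermitian) (hB : B.IsHermitian)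

lemma frobenius_norm_sq_cfc_sub_cfc (f g : ℝ → ℝ) :
    ‖hA.cfc f - hB.cfc g‖ ^ 2 = ∑ i, ∑ j, (f (hA.eigenvalues i) - g (hB.eigenvalues j)) ^ 2 *
      ‖(star (hA.eigenvectorUnitary : Matrix n n 𝕜) * hB.eigenvectorUnitary) i j‖ ^ 2 := by
  set U : Matrix n n 𝕜 := (hA.eigenvectorUnitary : Matrix n n 𝕜)
  set V : Matrix n n 𝕜 := (hB.eigenvectorUnitary : Matrix n n 𝕜)
  have hU : U ∈ unitaryGroup n 𝕜 := hA.eigenvectorUnitary.2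
  have hV : V ∈ unitaryGroup n 𝕜 := hB.eigenvectorUnitary.2
  have hconj : hA.cfc f - hB.cfc g = U * (diagonal (RCLike.ofReal ∘ f ∘ hA.eigenvalues) *
      (star U * V) - (star U * V) * diagonal (RCLike.ofReal ∘ g ∘ hB.eigenvalues)) * star V := by
    simp only [IsHermitian.cfc, Unitary.conjStarAlgAut_apply, mul_sub, sub_mul,
      ← mul_assoc, Unitary.mul_star_self_of_mem hU, one_mul]
    rw [mul_assoc _ V, Unitary.mul_star_self_of_mem hV, mul_one]
  rw [hconj, frobenius_norm_mul_unitary (Unitary.star_mem hV), frobenius_norm_unitary_mul hU,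
    frobenius_norm_sq_diagonal_mul_sub_mul_diagonal]
  simp only [Function.comp_apply, ← RCLike.ofReal_sub, RCLike.norm_ofReal, sq_abs]

lemma cfc_id : hA.cfc id = A := hA.spectral_theorem.symm

lemma frobenius_norm_sq_cfc (f : ℝ → ℝ) : ‖hA.cfc f‖ ^ 2 = ∑ i, f (hA.eigenvalues i) ^ 2 := by
  have hU := hA.eigenvectorUnitary.2
  rw [IsHermitian.cfc, Unitary.conjStarAlgAut_apply,
    frobenius_norm_mul_unitary (Unitary.star_mem hU), frobenius_norm_unitary_mul hU,
    frobenius_norm_diagonal, PiLp.norm_sq_eq_of_L2]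
  simp only [Function.comp_apply, RCLike.norm_ofReal, sq_abs]

lemma frobenius_norm_cfc_le {f : ℝ → ℝ} (hf : ∀ x, |f x| ≤ |x|) : ‖hA.cfc f‖ ≤ ‖A‖ := by
  rw [← sq_le_sq₀ (norm_nonneg _) (norm_nonneg _), frobenius_norm_sq_cfc]
  conv_rhs => rw [← hA.cfc_id, frobenius_norm_sq_cfc]
  exact Finset.sum_le_sum fun i _ => sq_le_sq.mpr (hf _)

lemma frobenius_norm_cfc_sub_cfc_le {K : NNReal} {f : ℝ → ℝ} (hf : LipschitzWith K f) :
    ‖hA.cfc f - hB.cfc f‖ ≤ K * ‖A - B‖ := by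
  rw [← sq_le_sq₀ (norm_nonneg _) (by positivity), mul_pow]
  conv_rhs => rw [← hA.cfc_id, ← hB.cfc_id]
  rw [frobenius_norm_sq_cfc_sub_cfc, frobenius_norm_sq_cfc_sub_cfc, Finset.mul_sum]
  refine Finset.sum_le_sum fun i _ => ?_
  rw [Finset.mul_sum]
  refine Finset.sum_le_sum fun j _ => ?_
  rw [← mul_assoc, ← mul_pow (K : ℝ)]
  refine mul_le_mul_of_nonneg_right ?_ (sq_nonneg _)
  rw [sq_le_sq, abs_mul, NNReal.abs_eq]
  simpa only [Real.dist_eq, id] using hf.dist_le_mul _ _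

lemma abs_sum_sq_comp_eigenvalues_sub_le {f : ℝ → ℝ} (hf : LipschitzWith 1 f)
    (hf_abs : ∀ x, |f x| ≤ |x|) :
    |∑ i, f (hA.eigenvalues i) ^ 2 - ∑ i, f (hB.eigenvalues i) ^ 2| ≤
      ‖A - B‖ * (‖A - B‖ + 2 * ‖B‖) := by
  have h_lip : ‖hA.cfc f - hB.cfc f‖ ≤ ‖A - B‖ := by
    simpa using hA.frobenius_norm_cfc_sub_cfc_le hB hf
  rw [← frobenius_norm_sq_cfc, ← frobenius_norm_sq_cfc]
  refine (abs_norm_sq_sub_norm_sq_le _ _).trans ?_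
  gcongr
  exact hB.frobenius_norm_cfc_le hf_abs

end Matrix.IsHermitian

lemma fnorm_eq_frobenius_norm {d : ℕ} (M : Matrix (Fin d) (Fin d) ℂ) : fnorm M = ‖M‖ :=
  (frobenius_norm_eq_sqrt_re_trace M).symm

lemma zeta_eq_sq_add_sq (x : ℝ) : zeta x = min x 0 ^ 2 + max (x - 1) 0 ^ 2 := by
  unfold zeta
  split_ifs with h0 h1
  · rw [min_eq_left h0, max_eq_right (by linarith)]; ring
  · rw [min_eq_right (by linarith), max_eq_left (by linarith)]; ring
  · rw [min_eq_right (by linarith), max_eq_right (by linarith)]; ring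

lemma abs_min_zero_le_abs (x : ℝ) : |min x 0| ≤ |x| := by
  rcases le_total x 0 with h | h <;> simp [h]

lemma abs_max_sub_one_zero_le_abs (x : ℝ) : |max (x - 1) 0| ≤ |x| := by
  rcases le_total x 1 with h | h
  · simp [h]
  · rw [max_eq_left (by linarith), abs_of_nonneg (by linarith), abs_of_nonneg (by linarith)]
    linarith

/-- `|Tr(ζ(P+Q) - ζ(P))| ≤ 4(‖P‖₂‖Q‖₂ + ‖Q‖₂²)` for Hermitian `P, Q`, where `Tr ζ(M)`
is computed via the eigenvalues of `M`. -/
theorem trace_zeta_additivity (d : ℕ) (P Q : Matrix (Fin d) (Fin d) ℂ)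
    (hP : P.IsHermitian) (hQ : Q.IsHermitian) :
    |(∑ i, zeta ((hP.add hQ).eigenvalues i)) - ∑ i, zeta (hP.eigenvalues i)| ≤
      4 * (fnorm P * fnorm Q + fnorm Q ^ 2) := by
  have h_neg := (hP.add hQ).abs_sum_sq_comp_eigenvalues_sub_le hP (f := fun x => min x 0)
    (LipschitzWith.id.min_const 0) abs_min_zero_le_abs
  have h_pos := (hP.add hQ).abs_sum_sq_comp_eigenvalues_sub_le hP (f := fun x => max (x - 1) 0)
    ((IsometryEquiv.subRight (1 : ℝ)).isometry.lipschitz.max_const 0) abs_max_sub_one_zero_le_abs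
  rw [add_sub_cancel_left] at h_neg h_pos
  simp only [zeta_eq_sq_add_sq, Finset.sum_add_distrib, add_sub_add_comm, fnorm_eq_frobenius_norm]
  refine (abs_add_le _ _).trans ?_
  nlinarith [norm_nonneg P, norm_nonneg Q]
end
end

section
/- Let ψ_{AB} be a bipartite state with maximally mixed marginals and let T: M(B) → M(A) be its Markov super-operator. For any Q ∈ M(B^n) and any subset S ⊆ [n], the n-fold Markov super-operator commutes with the Efron–Stein projection: T^{⊗n}(Q[S]) = (T^{⊗n}Q)[S], and ‖T^{⊗n}(Q[S])‖₂ ≤ ρ^{|S|}‖Q[S]‖₂ where ρ = ρ(ψ_{AB}) is the maximal correlation. -/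
open Matrix Kronecker
open scoped ComplexOrder

noncomputable section

/-- The tensor basis element `B_σ = B_{σ₁} ⊗ ⋯ ⊗ B_{σₙ}` of `M_d^{⊗n}`. -/
def tensorFam {d n : ℕ} (B : Fin (d ^ 2) → Matrix (Fin d) (Fin d) ℂ)
    (σ : Fin n → Fin (d ^ 2)) : Matrix (Fin n → Fin d) (Fin n → Fin d) ℂ :=
  Matrix.of fun x y => ∏ i, B (σ i) (x i) (y i)

/-- The Efron–Stein component `Q[S] = ∑_{σ : supp σ = S} Q̂(σ) B_σ`, with Fourier
coefficients `Q̂(σ) = d^{-n} Tr(B_σ† Q)` w.r.t. a standard orthonormal basis. -/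
def esProj {d n : ℕ} (B : Fin (d ^ 2) → Matrix (Fin d) (Fin d) ℂ)
    (Q : Matrix (Fin n → Fin d) (Fin n → Fin d) ℂ) (S : Finset (Fin n)) :
    Matrix (Fin n → Fin d) (Fin n → Fin d) ℂ :=
  ∑ σ ∈ Finset.univ.filter
      (fun σ : Fin n → Fin (d ^ 2) => (Finset.univ.filter fun i => (σ i : ℕ) ≠ 0) = S),
    (Matrix.trace ((tensorFam B σ)ᴴ * Q) / ((d : ℂ) ^ n)) • tensorFam B σ

/-- The maximal correlation of a bipartite state with maximally mixed marginals. -/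
def maxCorr {α β : Type*} [Fintype α] [Fintype β] [DecidableEq α] [DecidableEq β]
    (ψ : Matrix (α × β) (α × β) ℂ) : ℝ :=
  sSup {r : ℝ | ∃ (P : Matrix α α ℂ) (Q : Matrix β β ℂ),
    Matrix.trace P = 0 ∧ Matrix.trace Q = 0 ∧
    Matrix.trace (Pᴴ * P) = (Fintype.card α : ℂ) ∧
    Matrix.trace (Qᴴ * Q) = (Fintype.card β : ℂ) ∧
    r = ‖Matrix.trace ((Pᴴ ⊗ₖ Q) * ψ)‖}

/-!
In the tensor bases `B_σ`, the matrix of `T^{⊗n}` is `∏ᵢ c(σᵢ, τᵢ)`, where `c` is the matrix of `T`.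
The marginal conditions say that `T 1 = 1` and that `T` preserves trace zero, so `c(0, k) = δ_{k0}`
and `c(j, 0) = 0` for `j ≠ 0`; hence the coefficient vanishes unless `supp σ = supp τ`, and
`T^{⊗n}` is block diagonal with respect to supports, which is the commutation with `Q ↦ Q[S]`.
For the norm bound, `‖T Q‖₂² = Tr(((T Q)† ⊗ Q) ψ) ≤ ρ ‖T Q‖₂ ‖Q‖₂` for traceless `Q` by the
variational definition of `ρ`. Peeling off one tensor factor at a time, a factor in `S` acts on
traceless inputs and contracts by `ρ`, while a factor outside `S` acts isometrically on `1`.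
-/

open Finset

theorem sum_fin_succ_pi {M ε : Type*} [AddCommMonoid M] [Fintype ε] {n : ℕ}
    (f : (Fin (n + 1) → ε) → M) : ∑ σ, f σ = ∑ j, ∑ σ : Fin n → ε, f (Fin.cons j σ) := by
  rw [← Fintype.sum_prod_type']
  exact (Fintype.sum_equiv (Fin.consEquiv fun _ => ε) _ _ fun _ => rfl).symm

theorem sum_ite_mul_eq_ite_sum {A B X : Type*} [Fintype A] [DecidableEq X] {f : A → X}
    {g : B → X} {K : A → B → ℂ} (hK : ∀ a b, f a ≠ g b → K a b = 0) (v : A → ℂ) (S : X)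
    (b : B) :
    ∑ a, (if f a = S then v a else 0) * K a b = if g b = S then ∑ a, v a * K a b else 0 := by
  split_ifs with hb
  · refine sum_congr rfl fun a _ => ?_
    split_ifs with ha
    · rfl
    · rw [hK a b (hb ▸ ha), mul_zero, mul_zero]
  · refine sum_eq_zero fun a _ => ?_
    split_ifs with ha
    · rw [hK a b (ha ▸ Ne.symm hb), mul_zero]
    · rw [zero_mul]

namespace Matrix

section HilbertSchmidt

variable {m ι : Type*} [Fintype m] [Fintype ι]

theorem trace_conjTranspose_mul_eq_sum (A C : Matrix m m ℂ) :
    (Aᴴ * C).trace = ∑ x, ∑ y, star (A y x) * C y x := by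
  simp [trace, mul_apply]

theorem trace_conjTranspose_mul_self_eq_sum (A : Matrix m m ℂ) :
    (Aᴴ * A).trace = ((∑ x, ∑ y, ‖A y x‖ ^ 2 : ℝ) : ℂ) := by
  simp [trace_conjTranspose_mul_eq_sum, Complex.conj_mul']

theorem norm_trace_conjTranspose_mul_le (A C : Matrix m m ℂ) :
    ‖(Aᴴ * C).trace‖ ≤ ((Aᴴ * A).trace.re + (Cᴴ * C).trace.re) / 2 := by
  simp only [trace_conjTranspose_mul_eq_sum A C, trace_conjTranspose_mul_self_eq_sum,
    Complex.ofReal_re, ← sum_add_distrib, sum_div]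
  refine (norm_sum_le _ _).trans (sum_le_sum fun x _ => (norm_sum_le _ _).trans
    (sum_le_sum fun y _ => ?_))
  rw [norm_mul, norm_star]
  nlinarith [two_mul_le_add_sq ‖A y x‖ ‖C y x‖]

/-- The normalized 2-norm `‖X‖₂`. -/
def hsNorm (X : Matrix m m ℂ) : ℝ :=
  √((Xᴴ * X).trace.re / Fintype.card m)

theorem hsNorm_nonneg (X : Matrix m m ℂ) : 0 ≤ hsNorm X :=
  Real.sqrt_nonneg _

theorem trace_conjTranspose_mul_self_eq_hsNorm [Nonempty m] (X : Matrix m m ℂ) :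
    (Xᴴ * X).trace = ((Fintype.card m * hsNorm X ^ 2 : ℝ) : ℂ) := by
  have hre : 0 ≤ (Xᴴ * X).trace.re := by
    rw [trace_conjTranspose_mul_self_eq_sum, Complex.ofReal_re]
    positivity
  rw [hsNorm, Real.sq_sqrt (by positivity), mul_div_cancel₀ _ (by positivity),
    trace_conjTranspose_mul_self_eq_sum, Complex.ofReal_re]

theorem eq_zero_of_hsNorm_eq_zero [Nonempty m] {X : Matrix m m ℂ} (hX : hsNorm X = 0) :
    X = 0 := by
  rw [← trace_conjTranspose_mul_self_eq_zero_iff, trace_conjTranspose_mul_self_eq_hsNorm,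
    hX]
  simp

theorem eq_of_forall_trace_conjTranspose_mul_eq {X Y : Matrix m m ℂ}
    (h : ∀ M : Matrix m m ℂ, (Mᴴ * X).trace = (Mᴴ * Y).trace) : X = Y := by
  rw [← sub_eq_zero, ← trace_conjTranspose_mul_self_eq_zero_iff, mul_sub,
    trace_sub, h, sub_self]

variable [DecidableEq ι]

def IsHSOrthonormal (V : ι → Matrix m m ℂ) : Prop :=
  ∀ i j, ((V i)ᴴ * V j).trace = if i = j then (Fintype.card m : ℂ) else 0

namespace IsHSOrthonormal

variable {V : ι → Matrix m m ℂ} (hV : IsHSOrthonormal V)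
include hV

theorem trace_conjTranspose_mul_sum (C : ι → ℂ) (i : ι) :
    ((V i)ᴴ * ∑ j, C j • V j).trace = C i * Fintype.card m := by
  simp [mul_sum, trace_sum, hV i]

theorem linearIndependent [Nonempty m] : LinearIndependent ℂ V :=
  Fintype.linearIndependent_iff.2 fun C hC i => by
    simpa [hC] using (hV.trace_conjTranspose_mul_sum C i).symm

theorem eq_sum [Nonempty m] (hcard : Fintype.card ι = Fintype.card m * Fintype.card m)
    (X : Matrix m m ℂ) : X = ∑ i, (((V i)ᴴ * X).trace / Fintype.card m) • V i := by
  have hspan := hV.linearIndependent.span_eq_top_of_card_eq_finrank'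
    (by rw [hcard, Module.finrank_matrix, Module.finrank_self, mul_one])
  have hX : X ∈ Submodule.span ℂ (Set.range V) := hspan ▸ Submodule.mem_top
  obtain ⟨C, rfl⟩ := (Submodule.mem_span_range_iff_exists_fun ℂ).1 hX
  simp [hV.trace_conjTranspose_mul_sum]

theorem re_trace_sum (C : ι → ℂ) :
    ((∑ i, C i • V i)ᴴ * ∑ i, C i • V i).trace.re
      = Fintype.card m * ∑ i, Complex.normSq (C i) := by
  rw [conjTranspose_sum, sum_mul, trace_sum, mul_sum]
  simp only [conjTranspose_smul, smul_mul, trace_smul,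
    hV.trace_conjTranspose_mul_sum, Complex.re_sum]
  refine sum_congr rfl fun i _ => ?_
  rw [smul_eq_mul, ← mul_assoc, RCLike.star_def, ← Complex.normSq_eq_conj_mul_self, mul_comm]
  norm_cast

theorem hsNorm_sum [Nonempty m] (C : ι → ℂ) :
    hsNorm (∑ i, C i • V i) = √(∑ i, Complex.normSq (C i)) := by
  rw [hsNorm, hV.re_trace_sum, mul_div_cancel_left₀ _ (by positivity)]

end IsHSOrthonormal

end HilbertSchmidt

section PiKronecker

variable {ι κ m : Type*} [Fintype ι]

def piKronecker (M : ι → Matrix m m ℂ) : Matrix (ι → m) (ι → m) ℂ :=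
  Matrix.of fun x y => ∏ i, M i (x i) (y i)

variable [DecidableEq ι]

theorem piKronecker_sum_smul [Fintype κ] (a : ι → κ → ℂ) (B : κ → Matrix m m ℂ) :
    piKronecker (fun i => ∑ k, a i k • B k)
      = ∑ σ : ι → κ, (∏ i, a i (σ i)) • piKronecker (fun i => B (σ i)) := by
  ext x y
  simp only [piKronecker, of_apply, sum_apply, smul_apply, smul_eq_mul, Fintype.prod_sum,
    ← prod_mul_distrib]

variable [Fintype m]

theorem trace_conjTranspose_piKronecker_mul (M N : ι → Matrix m m ℂ) :
    ((piKronecker M)ᴴ * piKronecker N).trace = ∏ i, ((M i)ᴴ * N i).trace := by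
  simp only [trace_conjTranspose_mul_eq_sum, piKronecker, of_apply, star_prod,
    ← prod_mul_distrib, Fintype.prod_sum]

theorem IsHSOrthonormal.piKronecker [DecidableEq κ] {B : κ → Matrix m m ℂ}
    (hB : IsHSOrthonormal B) :
    IsHSOrthonormal fun σ : ι → κ => piKronecker fun i => B (σ i) := by
  intro σ τ
  rw [trace_conjTranspose_piKronecker_mul, prod_congr rfl fun i _ => hB (σ i) (τ i),
    prod_ite_zero]
  simp [funext_iff]

end PiKronecker

end Matrix

section StandardBasis

variable {d n : ℕ} {B : Fin (d ^ 2) → Matrix (Fin d) (Fin d) ℂ}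

def basisSupport (σ : Fin n → Fin (d ^ 2)) : Finset (Fin n) :=
  univ.filter fun i => (σ i : ℕ) ≠ 0

/-- The Fourier coefficient `Q̂(σ)`. -/
def tensorCoeff (B : Fin (d ^ 2) → Matrix (Fin d) (Fin d) ℂ)
    (X : Matrix (Fin n → Fin d) (Fin n → Fin d) ℂ) (σ : Fin n → Fin (d ^ 2)) : ℂ :=
  ((tensorFam B σ)ᴴ * X).trace / (d : ℂ) ^ n

theorem hsNorm_eq_sqrt_div_pow (X : Matrix (Fin n → Fin d) (Fin n → Fin d) ℂ) :
    hsNorm X = √((Xᴴ * X).trace.re / (d : ℝ) ^ n) := by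
  simp [hsNorm]

theorem esProj_eq_sum (X : Matrix (Fin n → Fin d) (Fin n → Fin d) ℂ) (S : Finset (Fin n)) :
    esProj B X S
      = ∑ σ, (if basisSupport σ = S then tensorCoeff B X σ else 0) • tensorFam B σ := by
  simp only [esProj, sum_filter, ite_smul, zero_smul]
  rfl

namespace IsStdONB

variable (hB : IsStdONB d B) (hd : 0 < d)
include hB hd

theorem isHSOrthonormal : IsHSOrthonormal B := by
  intro i j
  have h := hB.2.2.1 i j
  rw [innerN, div_eq_iff (by exact_mod_cast hd.ne')] at h
  simp [h]

theorem trace_eq_zero {i : Fin (d ^ 2)} (hi : (i : ℕ) ≠ 0) : (B i).trace = 0 := by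
  have h := hB.isHSOrthonormal hd ⟨0, by positivity⟩ i
  rwa [hB.2.1 _ rfl, conjTranspose_one, Matrix.one_mul, if_neg fun h => hi (by simp [← h])] at h

theorem isHSOrthonormal_tensorFam : IsHSOrthonormal (tensorFam B (n := n)) :=
  (hB.isHSOrthonormal hd).piKronecker

theorem tensorCoeff_sum_smul (C : (Fin n → Fin (d ^ 2)) → ℂ) :
    tensorCoeff B (∑ τ, C τ • tensorFam B τ) = C := by
  funext σ
  rw [tensorCoeff, (hB.isHSOrthonormal_tensorFam hd).trace_conjTranspose_mul_sum]
  simp [hd.ne']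

theorem sum_tensorCoeff_smul (X : Matrix (Fin n → Fin d) (Fin n → Fin d) ℂ) :
    ∑ σ, tensorCoeff B X σ • tensorFam B σ = X := by
  have : Nonempty (Fin d) := Fin.pos_iff_nonempty.1 hd
  refine Eq.trans ?_ ((hB.isHSOrthonormal_tensorFam hd).eq_sum ?_ X).symm
  · simp [tensorCoeff]
  · simp [← pow_mul, ← sq, mul_comm]

end IsStdONB

end StandardBasis

section Marginals

variable {α β : Type*} [Fintype α] [Fintype β] [DecidableEq α] [DecidableEq β]
  {ψ : Matrix (α × β) (α × β) ℂ}

theorem trace_kronecker_one_mul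
    (hmargA : Matrix.of (fun a a' : α => ∑ b, ψ (a, b) (a', b)) =
      (Fintype.card α : ℂ)⁻¹ • (1 : Matrix α α ℂ))
    (M : Matrix α α ℂ) :
    ((M ⊗ₖ (1 : Matrix β β ℂ)) * ψ).trace = M.trace / Fintype.card α := by
  have : ((M ⊗ₖ (1 : Matrix β β ℂ)) * ψ).trace
      = (M * Matrix.of (fun a a' : α => ∑ b, ψ (a, b) (a', b))).trace := by
    simp only [trace, diag_apply, mul_apply, kroneckerMap_apply, one_apply, mul_ite, mul_one,
      mul_zero, ite_mul, zero_mul, Fintype.sum_prod_type, sum_ite_eq, mem_univ, ↓reduceIte,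
      of_apply, mul_sum]
    exact sum_congr rfl fun _ _ => sum_comm
  rw [this, hmargA]
  simp [div_eq_mul_inv, mul_comm]

theorem trace_one_kronecker_mul
    (hmargB : Matrix.of (fun b b' : β => ∑ a, ψ (a, b) (a, b')) =
      (Fintype.card β : ℂ)⁻¹ • (1 : Matrix β β ℂ))
    (Q : Matrix β β ℂ) :
    (((1 : Matrix α α ℂ) ⊗ₖ Q) * ψ).trace = Q.trace / Fintype.card β := by
  have : (((1 : Matrix α α ℂ) ⊗ₖ Q) * ψ).trace
      = (Q * Matrix.of (fun b b' : β => ∑ a, ψ (a, b) (a, b'))).trace := by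
    simp only [trace, diag_apply, mul_apply, kroneckerMap_apply, one_apply, ite_mul, one_mul,
      zero_mul, Fintype.sum_prod_type, sum_ite_irrel, sum_const_zero, sum_ite_eq, mem_univ,
      ↓reduceIte, of_apply, mul_sum]
    rw [sum_comm]
    exact sum_congr rfl fun _ _ => sum_comm
  rw [this, hmargB]
  simp [div_eq_mul_inv, mul_comm]

end Marginals

section MarkovMap

variable {α β : Type*} [Fintype α] [Fintype β] {ψ : Matrix (α × β) (α × β) ℂ}
  {T : Matrix β β ℂ → Matrix α α ℂ} [Nonempty α]
  (hT : ∀ (M : Matrix α α ℂ) (Q : Matrix β β ℂ),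
    ((Mᴴ ⊗ₖ Q) * ψ).trace = (Mᴴ * T Q).trace / Fintype.card α)
include hT

theorem trace_conjTranspose_mul_markov (M : Matrix α α ℂ) (Q : Matrix β β ℂ) :
    (Mᴴ * T Q).trace = Fintype.card α * ((Mᴴ ⊗ₖ Q) * ψ).trace := by
  rw [hT, mul_div_cancel₀ _ (by simp)]

theorem isLinearMap_markov : IsLinearMap ℂ T where
  map_add Q Q' := eq_of_forall_trace_conjTranspose_mul_eq fun M => by
    simp only [trace_conjTranspose_mul_markov hT, Matrix.trace_add,
      Matrix.kronecker_add, Matrix.add_mul, mul_add]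
  map_smul c Q := eq_of_forall_trace_conjTranspose_mul_eq fun M => by
    simp only [trace_conjTranspose_mul_markov hT, Matrix.mul_smul, Matrix.trace_smul,
      Matrix.kronecker_smul, Matrix.smul_mul, smul_eq_mul, mul_left_comm]

variable [DecidableEq α] [DecidableEq β]

theorem markov_one
    (hmargA : Matrix.of (fun a a' : α => ∑ b, ψ (a, b) (a', b)) =
      (Fintype.card α : ℂ)⁻¹ • (1 : Matrix α α ℂ)) :
    T 1 = 1 := eq_of_forall_trace_conjTranspose_mul_eq fun M => by
  rw [trace_conjTranspose_mul_markov hT, trace_kronecker_one_mul hmargA, Matrix.mul_one,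
    mul_div_cancel₀ _ (by simp)]

theorem trace_markov
    (hmargB : Matrix.of (fun b b' : β => ∑ a, ψ (a, b) (a, b')) =
      (Fintype.card β : ℂ)⁻¹ • (1 : Matrix β β ℂ))
    (Q : Matrix β β ℂ) :
    (T Q).trace = Fintype.card α / Fintype.card β * Q.trace := by
  have h := trace_conjTranspose_mul_markov hT 1 Q
  rw [Matrix.conjTranspose_one, Matrix.one_mul, trace_one_kronecker_mul hmargB] at h
  rw [h]
  ring

end MarkovMap

section MaximalCorrelation

variable {α β : Type*} [Fintype α] [Fintype β] [DecidableEq α] [DecidableEq β]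
  {ψ : Matrix (α × β) (α × β) ℂ}

theorem maxCorr_nonneg : 0 ≤ maxCorr ψ :=
  Real.sSup_nonneg (by rintro _ ⟨P, Q, -, -, -, -, rfl⟩; exact norm_nonneg _)

theorem le_maxCorr {P : Matrix α α ℂ} {Q : Matrix β β ℂ} (hP : P.trace = 0) (hQ : Q.trace = 0)
    (hPP : (Pᴴ * P).trace = Fintype.card α) (hQQ : (Qᴴ * Q).trace = Fintype.card β) :
    ‖((Pᴴ ⊗ₖ Q) * ψ).trace‖ ≤ maxCorr ψ := by
  refine le_csSup ⟨(Fintype.card α * Fintype.card β + (ψᴴ * ψ).trace.re) / 2, ?_⟩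
    ⟨P, Q, hP, hQ, hPP, hQQ, rfl⟩
  rintro _ ⟨P, Q, -, -, hPP, hQQ, rfl⟩
  have hadj : Pᴴ ⊗ₖ Q = (P ⊗ₖ Qᴴ)ᴴ := by
    rw [Matrix.conjTranspose_kronecker, Matrix.conjTranspose_conjTranspose]
  have hnorm : ((P ⊗ₖ Qᴴ)ᴴ * (P ⊗ₖ Qᴴ)).trace = Fintype.card α * Fintype.card β := by
    rw [← hadj, ← Matrix.mul_kronecker_mul, Matrix.trace_kronecker, hPP, Matrix.trace_mul_comm,
      hQQ]
  rw [hadj]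
  refine (norm_trace_conjTranspose_mul_le _ _).trans_eq ?_
  rw [hnorm]
  norm_cast

theorem trace_conjTranspose_mul_self_inv_hsNorm_smul {γ : Type*} [Fintype γ] [Nonempty γ]
    {X : Matrix γ γ ℂ} (hX : hsNorm X ≠ 0) :
    (((hsNorm X : ℂ)⁻¹ • X)ᴴ * ((hsNorm X : ℂ)⁻¹ • X)).trace = Fintype.card γ := by
  rw [Matrix.conjTranspose_smul, Matrix.smul_mul, Matrix.mul_smul, Matrix.trace_smul,
    Matrix.trace_smul, trace_conjTranspose_mul_self_eq_hsNorm]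
  simp only [star_inv₀, Complex.star_def, Complex.conj_ofReal, smul_eq_mul]
  push_cast
  field_simp

theorem norm_trace_kronecker_mul_le [Nonempty α] [Nonempty β] {P : Matrix α α ℂ}
    {Q : Matrix β β ℂ} (hP : P.trace = 0) (hQ : Q.trace = 0) :
    ‖((Pᴴ ⊗ₖ Q) * ψ).trace‖ ≤ maxCorr ψ * hsNorm P * hsNorm Q := by
  rcases eq_or_ne (hsNorm P) 0 with hp | hp
  · rw [hp, eq_zero_of_hsNorm_eq_zero hp]
    simp
  rcases eq_or_ne (hsNorm Q) 0 with hq | hq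
  · rw [hq, eq_zero_of_hsNorm_eq_zero hq]
    simp
  have h := le_maxCorr (ψ := ψ) (by simp [hP]) (by simp [hQ])
    (trace_conjTranspose_mul_self_inv_hsNorm_smul hp)
    (trace_conjTranspose_mul_self_inv_hsNorm_smul hq)
  simp only [Matrix.conjTranspose_smul, Matrix.smul_kronecker, Matrix.kronecker_smul,
    Matrix.smul_mul, Matrix.trace_smul, norm_smul, norm_star, norm_inv, Complex.norm_real,
    Real.norm_of_nonneg (hsNorm_nonneg _)] at h
  have hp' := (hsNorm_nonneg P).lt_of_ne' hp
  have hq' := (hsNorm_nonneg Q).lt_of_ne' hq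
  rw [inv_mul_le_iff₀ hq', inv_mul_le_iff₀ hp'] at h
  linarith

variable {T : Matrix β β ℂ → Matrix α α ℂ} [Nonempty α] [Nonempty β]

theorem hsNorm_markov_le
    (hT : ∀ (M : Matrix α α ℂ) (Q : Matrix β β ℂ),
      ((Mᴴ ⊗ₖ Q) * ψ).trace = (Mᴴ * T Q).trace / Fintype.card α)
    (hmargB : Matrix.of (fun b b' : β => ∑ a, ψ (a, b) (a, b')) =
      (Fintype.card β : ℂ)⁻¹ • (1 : Matrix β β ℂ))
    {Q : Matrix β β ℂ} (hQ : Q.trace = 0) :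
    hsNorm (T Q) ≤ maxCorr ψ * hsNorm Q := by
  have hsq : hsNorm (T Q) ^ 2 ≤ maxCorr ψ * hsNorm (T Q) * hsNorm Q := by
    have h := norm_trace_kronecker_mul_le (ψ := ψ) (P := T Q)
      (by rw [trace_markov hT hmargB, hQ, mul_zero]) hQ
    rwa [hT, trace_conjTranspose_mul_self_eq_hsNorm, ← Complex.ofReal_natCast,
      ← Complex.ofReal_div, Complex.norm_real, mul_div_cancel_left₀ _ (by simp),
      Real.norm_of_nonneg (by positivity)] at h
  rcases (hsNorm_nonneg (T Q)).eq_or_lt with h0 | hpos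
  · rw [← h0]
    exact mul_nonneg maxCorr_nonneg (hsNorm_nonneg Q)
  · exact le_of_mul_le_mul_right (by linarith) hpos

end MaximalCorrelation

section MarkovCoefficients

variable {dA dB : ℕ} {T : Matrix (Fin dB) (Fin dB) ℂ → Matrix (Fin dA) (Fin dA) ℂ}
  {BA : Fin (dA ^ 2) → Matrix (Fin dA) (Fin dA) ℂ} {BB : Fin (dB ^ 2) → Matrix (Fin dB) (Fin dB) ℂ}

def markovCoeff (T : Matrix (Fin dB) (Fin dB) ℂ → Matrix (Fin dA) (Fin dA) ℂ)
    (BA : Fin (dA ^ 2) → Matrix (Fin dA) (Fin dA) ℂ)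
    (BB : Fin (dB ^ 2) → Matrix (Fin dB) (Fin dB) ℂ) (j : Fin (dB ^ 2)) (k : Fin (dA ^ 2)) : ℂ :=
  ((BA k)ᴴ * T (BB j)).trace / dA

theorem markov_basis_eq_sum (hBA : IsStdONB dA BA) (hA : 0 < dA) (j : Fin (dB ^ 2)) :
    T (BB j) = ∑ k, markovCoeff T BA BB j k • BA k := by
  have : Nonempty (Fin dA) := Fin.pos_iff_nonempty.1 hA
  simpa [markovCoeff] using (hBA.isHSOrthonormal hA).eq_sum (by simp [sq]) (T (BB j))

theorem markov_sum_smul (hlin : IsLinearMap ℂ T) (hBA : IsStdONB dA BA) (hA : 0 < dA)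
    (u : Fin (dB ^ 2) → ℂ) :
    T (∑ j, u j • BB j) = ∑ k, (∑ j, u j * markovCoeff T BA BB j k) • BA k := by
  change IsLinearMap.mk' T hlin _ = _
  rw [map_sum]
  simp only [map_smul, IsLinearMap.mk'_apply, markov_basis_eq_sum (T := T) (BB := BB) hBA hA,
    smul_sum, smul_smul]
  rw [sum_comm]
  simp only [sum_smul]

theorem markovCoeff_of_val_eq_zero_left (hBA : IsStdONB dA BA) (hA : 0 < dA)
    (hBB : IsStdONB dB BB) (hT1 : T 1 = 1) {j : Fin (dB ^ 2)} (hj : (j : ℕ) = 0)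
    (k : Fin (dA ^ 2)) : markovCoeff T BA BB j k = if (k : ℕ) = 0 then 1 else 0 := by
  have h := hBA.isHSOrthonormal hA k ⟨0, by positivity⟩
  rw [hBA.2.1 ⟨0, by positivity⟩ rfl] at h
  rw [markovCoeff, hBB.2.1 j hj, hT1, h]
  simp only [Fin.ext_iff, Fintype.card_fin]
  split_ifs <;> simp [hA.ne']

theorem markovCoeff_of_val_eq_zero_right (hBA : IsStdONB dA BA) (hBB : IsStdONB dB BB)
    (hB : 0 < dB) (htr : ∀ Q, Q.trace = 0 → (T Q).trace = 0) {j : Fin (dB ^ 2)}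
    (hj : (j : ℕ) ≠ 0) {k : Fin (dA ^ 2)} (hk : (k : ℕ) = 0) : markovCoeff T BA BB j k = 0 := by
  rw [markovCoeff, hBA.2.1 k hk, Matrix.conjTranspose_one, Matrix.one_mul,
    htr _ (hBB.trace_eq_zero hB hj), zero_div]

end MarkovCoefficients

section MarkovCoefficientBounds

variable {dA dB : ℕ} {T : Matrix (Fin dB) (Fin dB) ℂ → Matrix (Fin dA) (Fin dA) ℂ}
  {BA : Fin (dA ^ 2) → Matrix (Fin dA) (Fin dA) ℂ} {BB : Fin (dB ^ 2) → Matrix (Fin dB) (Fin dB) ℂ}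
  (hBA : IsStdONB dA BA) (hA : 0 < dA) (hBB : IsStdONB dB BB) (hB : 0 < dB)
include hBA hA hBB hB

theorem sum_normSq_markovCoeff_le (hlin : IsLinearMap ℂ T) {ρ : ℝ}
    (hcontr : ∀ Q, Q.trace = 0 → hsNorm (T Q) ≤ ρ * hsNorm Q) {u : Fin (dB ^ 2) → ℂ}
    (hu : ∀ j : Fin (dB ^ 2), (j : ℕ) = 0 → u j = 0) :
    ∑ k, Complex.normSq (∑ j, u j * markovCoeff T BA BB j k)
      ≤ ρ ^ 2 * ∑ j, Complex.normSq (u j) := by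
  have : Nonempty (Fin dA) := Fin.pos_iff_nonempty.1 hA
  have : Nonempty (Fin dB) := Fin.pos_iff_nonempty.1 hB
  have htr : (∑ j, u j • BB j).trace = 0 := by
    refine (Matrix.trace_sum _ _).trans (sum_eq_zero fun j _ => ?_)
    by_cases hj : (j : ℕ) = 0
    · rw [hu j hj, zero_smul, Matrix.trace_zero]
    · simp [hBB.trace_eq_zero hB hj]
  have h := hcontr _ htr
  rw [markov_sum_smul hlin hBA hA, (hBA.isHSOrthonormal hA).hsNorm_sum,
    (hBB.isHSOrthonormal hB).hsNorm_sum] at h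
  calc _ = √(∑ k, Complex.normSq (∑ j, u j * markovCoeff T BA BB j k)) ^ 2 :=
        (Real.sq_sqrt (sum_nonneg fun _ _ => Complex.normSq_nonneg _)).symm
    _ ≤ (ρ * √(∑ j, Complex.normSq (u j))) ^ 2 := pow_le_pow_left₀ (Real.sqrt_nonneg _) h 2
    _ = _ := by rw [mul_pow, Real.sq_sqrt (sum_nonneg fun _ _ => Complex.normSq_nonneg _)]

theorem sum_normSq_markovCoeff_of_val_ne_zero (hT1 : T 1 = 1) {u : Fin (dB ^ 2) → ℂ}
    (hu : ∀ j : Fin (dB ^ 2), (j : ℕ) ≠ 0 → u j = 0) :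
    ∑ k, Complex.normSq (∑ j, u j * markovCoeff T BA BB j k) = ∑ j, Complex.normSq (u j) := by
  set jB : Fin (dB ^ 2) := ⟨0, by positivity⟩
  set kA : Fin (dA ^ 2) := ⟨0, by positivity⟩
  have hu' : ∀ j, j ≠ jB → u j = 0 := fun j hj => hu j (by simpa [Fin.ext_iff] using hj)
  have hsum k : ∑ j, u j * markovCoeff T BA BB j k = u jB * markovCoeff T BA BB jB k :=
    sum_eq_single_of_mem jB (mem_univ _) fun j _ hj => by rw [hu' j hj, zero_mul]
  have hnorm : ∑ j, Complex.normSq (u j) = Complex.normSq (u jB) :=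
    sum_eq_single_of_mem jB (mem_univ _) fun j _ hj => by rw [hu' j hj, Complex.normSq_zero]
  simp only [hsum, markovCoeff_of_val_eq_zero_left hBA hA hBB hT1 (j := jB) rfl, hnorm]
  rw [sum_eq_single_of_mem kA (mem_univ _) fun k _ hk => by simp [kA, Fin.ext_iff] at hk; simp [hk]]
  simp [kA]

theorem prod_markovCoeff_eq_zero {n : ℕ} (hT1 : T 1 = 1)
    (htr : ∀ Q, Q.trace = 0 → (T Q).trace = 0) {σ : Fin n → Fin (dB ^ 2)}
    {τ : Fin n → Fin (dA ^ 2)} (h : basisSupport σ ≠ basisSupport τ) :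
    ∏ i, markovCoeff T BA BB (σ i) (τ i) = 0 := by
  obtain ⟨i, hi⟩ : ∃ i, ¬((σ i : ℕ) ≠ 0 ↔ (τ i : ℕ) ≠ 0) := by
    by_contra! hall
    exact h (by ext i; simp [basisSupport, hall i])
  refine prod_eq_zero (mem_univ i) ?_
  by_cases hσ : (σ i : ℕ) = 0
  · rw [markovCoeff_of_val_eq_zero_left hBA hA hBB hT1 hσ, if_neg (by tauto)]
  · exact markovCoeff_of_val_eq_zero_right hBA hBB hB htr hσ (by tauto)

end MarkovCoefficientBounds

section Tensorization

variable {γ δ : Type*} [Fintype γ] [Fintype δ]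

theorem sum_normSq_tensor_le {n : ℕ} (c : Fin n → γ → δ → ℂ) (K : Fin n → Set γ)
    (s : Fin n → ℝ) (hs : ∀ i, 0 ≤ s i)
    (hc : ∀ i (u : γ → ℂ), (∀ j ∉ K i, u j = 0) →
      ∑ k, Complex.normSq (∑ j, u j * c i j k) ≤ s i * ∑ j, Complex.normSq (u j))
    (v : (Fin n → γ) → ℂ) (hv : ∀ σ i, σ i ∉ K i → v σ = 0) :
    ∑ τ : Fin n → δ, Complex.normSq (∑ σ, v σ * ∏ i, c i (σ i) (τ i))
      ≤ (∏ i, s i) * ∑ σ, Complex.normSq (v σ) := by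
  induction n with
  | zero => simp
  | succ n ih =>
    set W : γ → (Fin n → δ) → ℂ := fun j τ => ∑ σ, v (Fin.cons j σ) * ∏ i, c i.succ (σ i) (τ i)
    have hW k τ : ∑ σ, v σ * ∏ i, c i (σ i) ((Fin.cons k τ : Fin (n + 1) → δ) i)
        = ∑ j, W j τ * c 0 j k := by
      simp only [sum_fin_succ_pi, Fin.prod_univ_succ, Fin.cons_zero, Fin.cons_succ, W, sum_mul]
      exact sum_congr rfl fun j _ => sum_congr rfl fun σ _ => by ring
    calc ∑ τ : Fin (n + 1) → δ, Complex.normSq (∑ σ, v σ * ∏ i, c i (σ i) (τ i))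
        = ∑ τ, ∑ k, Complex.normSq (∑ j, W j τ * c 0 j k) := by
          rw [sum_fin_succ_pi, sum_comm]
          simp only [hW]
      _ ≤ ∑ τ, s 0 * ∑ j, Complex.normSq (W j τ) :=
          sum_le_sum fun τ _ => hc 0 (W · τ) fun j hj =>
            sum_eq_zero fun σ _ => by rw [hv _ 0 (by simpa using hj), zero_mul]
      _ = s 0 * ∑ j, ∑ τ, Complex.normSq (W j τ) := by rw [← mul_sum, sum_comm]
      _ ≤ s 0 * ∑ j, (∏ i : Fin n, s i.succ) * ∑ σ, Complex.normSq (v (Fin.cons j σ)) :=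
          mul_le_mul_of_nonneg_left (sum_le_sum fun j _ =>
            ih (fun i => c i.succ) (fun i => K i.succ) (fun i => s i.succ) (fun i => hs _)
              (fun i => hc _) _ fun σ i hi => hv _ i.succ (by simpa using hi)) (hs 0)
      _ = (∏ i, s i) * ∑ σ, Complex.normSq (v σ) := by
          rw [Fin.prod_univ_succ, sum_fin_succ_pi, ← mul_sum, mul_assoc]

end Tensorization

section MarkovTensor

variable {dA dB n : ℕ} {T : Matrix (Fin dB) (Fin dB) ℂ → Matrix (Fin dA) (Fin dA) ℂ}
  {BA : Fin (dA ^ 2) → Matrix (Fin dA) (Fin dA) ℂ} {BB : Fin (dB ^ 2) → Matrix (Fin dB) (Fin dB) ℂ}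

theorem sum_normSq_markovTensor_le (hBA : IsStdONB dA BA) (hA : 0 < dA)
    (hBB : IsStdONB dB BB) (hB : 0 < dB) (hlin : IsLinearMap ℂ T) (hT1 : T 1 = 1) {ρ : ℝ}
    (hcontr : ∀ Q, Q.trace = 0 → hsNorm (T Q) ≤ ρ * hsNorm Q) {S : Finset (Fin n)}
    {v : (Fin n → Fin (dB ^ 2)) → ℂ} (hv : ∀ σ, basisSupport σ ≠ S → v σ = 0) :
    ∑ τ : Fin n → Fin (dA ^ 2),
        Complex.normSq (∑ σ, v σ * ∏ i, markovCoeff T BA BB (σ i) (τ i))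
      ≤ (ρ ^ S.card) ^ 2 * ∑ σ, Complex.normSq (v σ) := by
  have hprod : ∏ i, (if i ∈ S then ρ ^ 2 else 1) = (ρ ^ S.card) ^ 2 := by
    rw [prod_ite_mem, univ_inter, prod_const, ← pow_mul, ← pow_mul, mul_comm]
  rw [← hprod]
  -- Factor `i` receives traceless inputs if `i ∈ S` and multiples of `1` otherwise.
  refine sum_normSq_tensor_le (fun _ => markovCoeff T BA BB)
    (fun i => {j | (j : ℕ) ≠ 0 ↔ i ∈ S}) _ (fun i => by positivity) (fun i u hu => ?_) v
    fun σ i hi => hv σ fun hσ => hi (by simp [← hσ, basisSupport])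
  by_cases hi : i ∈ S
  · simpa [hi] using sum_normSq_markovCoeff_le hBA hA hBB hB hlin hcontr (u := u)
      fun j hj => hu j (by simp [hi, hj])
  · simpa [hi] using (sum_normSq_markovCoeff_of_val_ne_zero hBA hA hBB hB hT1 (u := u)
      fun j hj => hu j (by simp [hi, hj])).le

theorem markovTensor_sum_smul (hBA : IsStdONB dA BA) (hA : 0 < dA)
    {Tn : Matrix (Fin n → Fin dB) (Fin n → Fin dB) ℂ →
      Matrix (Fin n → Fin dA) (Fin n → Fin dA) ℂ}
    (hTnlin : IsLinearMap ℂ Tn)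
    (hTnprod : ∀ Q : Fin n → Matrix (Fin dB) (Fin dB) ℂ,
      Tn (piKronecker Q) = piKronecker fun i => T (Q i))
    (u : (Fin n → Fin (dB ^ 2)) → ℂ) :
    Tn (∑ σ, u σ • tensorFam BB σ)
      = ∑ τ, (∑ σ, u σ * ∏ i, markovCoeff T BA BB (σ i) (τ i)) • tensorFam BA τ := by
  have hbasis σ : Tn (tensorFam BB σ)
      = ∑ τ, (∏ i, markovCoeff T BA BB (σ i) (τ i)) • tensorFam BA τ := by
    rw [show tensorFam BB σ = piKronecker fun i => BB (σ i) from rfl, hTnprod]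
    simp only [markov_basis_eq_sum (T := T) (BB := BB) hBA hA]
    exact piKronecker_sum_smul _ BA
  change IsLinearMap.mk' Tn hTnlin _ = _
  rw [map_sum]
  simp only [map_smul, IsLinearMap.mk'_apply, hbasis, smul_sum, smul_smul]
  rw [sum_comm]
  simp only [sum_smul]

end MarkovTensor

theorem markov_efron_stein_general (dA dB n : ℕ) (hA : 0 < dA) (hB : 0 < dB)
    (ψ : Matrix (Fin dA × Fin dB) (Fin dA × Fin dB) ℂ)
    (hmargA : Matrix.of (fun a a' : Fin dA => ∑ b, ψ (a, b) (a', b)) =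
      (dA : ℂ)⁻¹ • (1 : Matrix (Fin dA) (Fin dA) ℂ))
    (hmargB : Matrix.of (fun b b' : Fin dB => ∑ a, ψ (a, b) (a, b')) =
      (dB : ℂ)⁻¹ • (1 : Matrix (Fin dB) (Fin dB) ℂ))
    (T : Matrix (Fin dB) (Fin dB) ℂ → Matrix (Fin dA) (Fin dA) ℂ)
    (hT : ∀ (M : Matrix (Fin dA) (Fin dA) ℂ) (Q : Matrix (Fin dB) (Fin dB) ℂ),
      Matrix.trace ((Mᴴ ⊗ₖ Q) * ψ) = Matrix.trace (Mᴴ * T Q) / (dA : ℂ))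
    (Tn : Matrix (Fin n → Fin dB) (Fin n → Fin dB) ℂ →
      Matrix (Fin n → Fin dA) (Fin n → Fin dA) ℂ)
    (hTnlin : IsLinearMap ℂ Tn)
    (hTnprod : ∀ Q : Fin n → Matrix (Fin dB) (Fin dB) ℂ,
      Tn (Matrix.of fun x y => ∏ i, Q i (x i) (y i)) =
        Matrix.of fun x y => ∏ i, T (Q i) (x i) (y i))
    (BA : Fin (dA ^ 2) → Matrix (Fin dA) (Fin dA) ℂ) (hBA : IsStdONB dA BA)
    (BB : Fin (dB ^ 2) → Matrix (Fin dB) (Fin dB) ℂ) (hBB : IsStdONB dB BB)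
    (Q : Matrix (Fin n → Fin dB) (Fin n → Fin dB) ℂ) (S : Finset (Fin n)) :
    Tn (esProj BB Q S) = esProj BA (Tn Q) S ∧
    Real.sqrt ((Matrix.trace ((Tn (esProj BB Q S))ᴴ * Tn (esProj BB Q S))).re /
        ((dA : ℝ) ^ n)) ≤
      maxCorr ψ ^ S.card *
        Real.sqrt ((Matrix.trace ((esProj BB Q S)ᴴ * esProj BB Q S)).re /
          ((dB : ℝ) ^ n)) := by
  have : Nonempty (Fin dA) := Fin.pos_iff_nonempty.1 hA
  have : Nonempty (Fin dB) := Fin.pos_iff_nonempty.1 hB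
  replace hT : ∀ (M : Matrix (Fin dA) (Fin dA) ℂ) Q,
      ((Mᴴ ⊗ₖ Q) * ψ).trace = (Mᴴ * T Q).trace / (Fintype.card (Fin dA) : ℂ) := by
    simpa using hT
  replace hmargA : Matrix.of (fun a a' : Fin dA => ∑ b, ψ (a, b) (a', b)) =
      (Fintype.card (Fin dA) : ℂ)⁻¹ • 1 := by simpa using hmargA
  replace hmargB : Matrix.of (fun b b' : Fin dB => ∑ a, ψ (a, b) (a, b')) =
      (Fintype.card (Fin dB) : ℂ)⁻¹ • 1 := by simpa using hmargB
  have htr Q (hQ : Q.trace = 0) : (T Q).trace = 0 := by rw [trace_markov hT hmargB, hQ, mul_zero]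
  have hTQ := markovTensor_sum_smul (BB := BB) hBA hA hTnlin hTnprod (tensorCoeff BB Q)
  rw [hBB.sum_tensorCoeff_smul hB] at hTQ
  have hTQS := markovTensor_sum_smul (BB := BB) hBA hA hTnlin hTnprod
    (fun σ => if basisSupport σ = S then tensorCoeff BB Q σ else 0)
  rw [← esProj_eq_sum] at hTQS
  refine ⟨?_, ?_⟩
  · rw [hTQS, esProj_eq_sum, hTQ, hBA.tensorCoeff_sum_smul hA]
    simp only [sum_ite_mul_eq_ite_sum (fun σ τ h => prod_markovCoeff_eq_zero hBA hA hBB hB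
      (markov_one hT hmargA) htr h)]
  · rw [← hsNorm_eq_sqrt_div_pow, ← hsNorm_eq_sqrt_div_pow, hTQS, esProj_eq_sum,
      (hBA.isHSOrthonormal_tensorFam hA).hsNorm_sum, (hBB.isHSOrthonormal_tensorFam hB).hsNorm_sum,
      ← Real.sqrt_sq (pow_nonneg maxCorr_nonneg _), ← Real.sqrt_mul (sq_nonneg _)]
    exact Real.sqrt_le_sqrt <| sum_normSq_markovTensor_le hBA hA hBB hB (isLinearMap_markov hT)
      (markov_one hT hmargA) (fun Q hQ => hsNorm_markov_le hT hmargB hQ) fun _ hσ => if_neg hσ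

/-- The `n`-fold Markov super-operator commutes with the Efron–Stein projections, and
`‖T^{⊗n}(Q[S])‖₂ ≤ ρ^{|S|} ‖Q[S]‖₂` where `ρ` is the maximal correlation of `ψ_{AB}`. -/
theorem markov_efron_stein (dA dB n : ℕ) (hA : 0 < dA) (hB : 0 < dB)
    (ψ : Matrix (Fin dA × Fin dB) (Fin dA × Fin dB) ℂ)
    (hpsd : ψ.PosSemidef) (htr : ψ.trace = 1)
    (hmargA : Matrix.of (fun a a' : Fin dA => ∑ b, ψ (a, b) (a', b)) =
      (dA : ℂ)⁻¹ • (1 : Matrix (Fin dA) (Fin dA) ℂ))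
    (hmargB : Matrix.of (fun b b' : Fin dB => ∑ a, ψ (a, b) (a, b')) =
      (dB : ℂ)⁻¹ • (1 : Matrix (Fin dB) (Fin dB) ℂ))
    (T : Matrix (Fin dB) (Fin dB) ℂ → Matrix (Fin dA) (Fin dA) ℂ)
    (hT : ∀ (M : Matrix (Fin dA) (Fin dA) ℂ) (Q : Matrix (Fin dB) (Fin dB) ℂ),
      Matrix.trace ((Mᴴ ⊗ₖ Q) * ψ) = Matrix.trace (Mᴴ * T Q) / (dA : ℂ))
    (Tn : Matrix (Fin n → Fin dB) (Fin n → Fin dB) ℂ →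
      Matrix (Fin n → Fin dA) (Fin n → Fin dA) ℂ)
    (hTnlin : IsLinearMap ℂ Tn)
    (hTnprod : ∀ Q : Fin n → Matrix (Fin dB) (Fin dB) ℂ,
      Tn (Matrix.of fun x y => ∏ i, Q i (x i) (y i)) =
        Matrix.of fun x y => ∏ i, T (Q i) (x i) (y i))
    (BA : Fin (dA ^ 2) → Matrix (Fin dA) (Fin dA) ℂ) (hBA : IsStdONB dA BA)
    (BB : Fin (dB ^ 2) → Matrix (Fin dB) (Fin dB) ℂ) (hBB : IsStdONB dB BB)
    (Q : Matrix (Fin n → Fin dB) (Fin n → Fin dB) ℂ) (S : Finset (Fin n)) :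
    Tn (esProj BB Q S) = esProj BA (Tn Q) S ∧
    Real.sqrt ((Matrix.trace ((Tn (esProj BB Q S))ᴴ * Tn (esProj BB Q S))).re /
        ((dA : ℝ) ^ n)) ≤
      maxCorr ψ ^ S.card *
        Real.sqrt ((Matrix.trace ((esProj BB Q S)ᴴ * esProj BB Q S)).re /
          ((dB : ℝ) ^ n)) :=
  markov_efron_stein_general dA dB n hA hB ψ hmargA hmargB T hT Tn hTnlin hTnprod BA hBA BB hBB Q S
end
end
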